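/- arXiv:2506.22420 — 9 statements merged into one kernel-verified Lean document; each statement's English description precedes it below -/
import Mathlib

section
/- Let 0 < α < β with α/β irrational. Then for every x ∈ [0, β], the orbit of x under finite compositions of the maps f_α(y) = |α − y| and f_β(y) = |β − y| is dense in [0, β]. -/
/-- The orbit of `x` under finite compositions of the maps `y ↦ |θ - y|`, `θ ∈ {a, b}`. -/
def orbit (a b x : ℝ) : Set ℝ :=
  {y | ∃ l : List ℝ, (∀ θ ∈ l, θ = a ∨ θ = b) ∧ y = l.foldl (fun z θ => |θ - z|) x}

namespace Stmt3Aux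

lemma self_mem (a b x : ℝ) : x ∈ orbit a b x := ⟨[], by simp, rfl⟩

lemma orbit_step {a b x y : ℝ} (θ : ℝ) (hθ : θ = a ∨ θ = b) (hy : y ∈ orbit a b x) :
    |θ - y| ∈ orbit a b x := by
  obtain ⟨l, hl, rfl⟩ := hy
  refine ⟨l ++ [θ], ?_, ?_⟩
  · intro t ht
    rcases List.mem_append.1 ht with h | h
    · exact hl t h
    · simp at h; subst h; exact hθ
  · simp [List.foldl_append]

/-- folding map: `t mod β` -/
noncomputable def F (β t : ℝ) : ℝ := β * Int.fract (t / β)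

variable {β : ℝ}

lemma F_nonneg (hβ : 0 < β) (t : ℝ) : 0 ≤ F β t :=
  mul_nonneg hβ.le (Int.fract_nonneg _)

lemma F_lt (hβ : 0 < β) (t : ℝ) : F β t < β := by
  have := Int.fract_lt_one (t / β)
  calc β * Int.fract (t / β) < β * 1 := by nlinarith
  _ = β := mul_one β

lemma F_add_int_mul (hβ : 0 < β) (t : ℝ) (m : ℤ) : F β (t + m * β) = F β t := by
  unfold F
  rw [show (t + m * β) / β = t / β + m by field_simp, Int.fract_add_intCast]

lemma F_eq_self (hβ : 0 < β) {t : ℝ} (h0 : 0 ≤ t) (h1 : t < β) : F β t = t := by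
  unfold F
  rw [Int.fract_eq_self.2 ⟨by positivity, by rwa [div_lt_one hβ]⟩]
  field_simp

lemma F_eq_of (hβ : 0 < β) {t : ℝ} (m : ℤ) (h0 : 0 ≤ t - m * β) (h1 : t - m * β < β) :
    F β t = t - m * β := by
  have h := F_add_int_mul hβ (t - m * β) m
  rw [sub_add_cancel] at h
  rw [h, F_eq_self hβ h0 h1]

lemma key_orbit {α β x : ℝ} (hα : 0 < α) (hαβ : α < β) (hx : x ∈ Set.Icc 0 β) :
    ∀ n : ℕ, F β (x + n * α) ∈ orbit α β x := by
  have hβ : 0 < β := hα.trans hαβ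
  intro n
  induction n with
  | zero =>
    simp only [Nat.cast_zero, zero_mul, add_zero]
    rcases lt_or_eq_of_le hx.2 with h | h
    · rw [F_eq_self hβ hx.1 h]; exact self_mem _ _ _
    · have h0 : F β x = 0 := by
        rw [h, F_eq_of hβ 1 (by push_cast; linarith) (by push_cast; linarith)]
        push_cast; ring
      rw [h0]
      have := orbit_step (a := α) (b := β) (x := x) β (Or.inr rfl) (self_mem _ _ _)
      simpa [h] using this
  | succ n ih =>
    set r := F β (x + n * α) with hr
    have hr0 : 0 ≤ r := F_nonneg hβ _
    have hrβ : r < β := F_lt hβ _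
    have hF : F β (x + (n + 1 : ℕ) * α) = F β (r + α) := by
      have hrdef : r = (x + n * α) - β * ⌊(x + n * α) / β⌋ := by
        rw [hr]; unfold F Int.fract; field_simp; try ring
      have h2 : x + ((n : ℝ) + 1) * α = (r + α) + (⌊(x + n * α) / β⌋ : ℤ) * β := by
        rw [hrdef]; ring
      rw [Nat.cast_add, Nat.cast_one, h2, F_add_int_mul hβ]
    rw [hF]
    have h1 : |β - r| ∈ orbit α β x := orbit_step β (Or.inr rfl) ih
    have e1 : |β - r| = β - r := abs_of_nonneg (by linarith)
    rw [e1] at h1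
    rcases lt_or_ge (r + α) β with hc | hc
    · have h2 : |α - (β - r)| ∈ orbit α β x := orbit_step α (Or.inl rfl) h1
      have e2 : |α - (β - r)| = β - r - α := by
        rw [abs_of_nonpos (by linarith)]; ring
      rw [e2] at h2
      have h3 : |β - (β - r - α)| ∈ orbit α β x := orbit_step β (Or.inr rfl) h2
      have e3 : |β - (β - r - α)| = r + α := by
        rw [abs_of_nonneg (by linarith)]; ring
      rw [e3] at h3
      rwa [F_eq_self hβ (by linarith) hc]
    · have h2 : |α - (β - r)| ∈ orbit α β x := orbit_step α (Or.inl rfl) h1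
      have e2 : |α - (β - r)| = r + α - β := by
        rw [abs_of_nonneg (by linarith)]; ring
      rw [e2] at h2
      rw [F_eq_of hβ 1 (by push_cast; linarith) (by push_cast; linarith)]
      have : r + α - (1 : ℤ) * β = r + α - β := by push_cast; ring
      rwa [this]

lemma exists_small {α β : ℝ} (hα : 0 < α) (hβ : 0 < β) (hirr : Irrational (α / β))
    {ε : ℝ} (hε : 0 < ε) :
    ∃ m n : ℤ, 0 < m * α + n * β ∧ m * α + n * β < ε := by
  rcases AddSubgroup.dense_or_cyclic (AddSubgroup.closure {α, β}) with hd | ⟨a, ha⟩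
  · obtain ⟨s, hs1, hs2⟩ := hd.exists_mem_open isOpen_Ioo (Set.nonempty_Ioo.2 hε)
    obtain ⟨m, n, rfl⟩ := AddSubgroup.mem_closure_pair.1 hs1
    exact ⟨m, n, by simpa [zsmul_eq_mul] using hs2.1, by simpa [zsmul_eq_mul] using hs2.2⟩
  · exfalso
    have hαm : α ∈ AddSubgroup.closure ({α, β} : Set ℝ) :=
      AddSubgroup.subset_closure (by simp)
    have hβm : β ∈ AddSubgroup.closure ({α, β} : Set ℝ) :=
      AddSubgroup.subset_closure (by simp)
    rw [ha, AddSubgroup.mem_closure_singleton] at hαm hβm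
    obtain ⟨p, hp⟩ := hαm
    obtain ⟨q, hq⟩ := hβm
    have ha0 : a ≠ 0 := by
      rintro rfl; rw [smul_zero] at hp; linarith
    have : α / β = ((p : ℚ) / (q : ℚ) : ℚ) := by
      push_cast
      rw [← hp, ← hq, zsmul_eq_mul, zsmul_eq_mul]
      rw [mul_div_mul_right _ _ ha0]
    rw [this] at hirr
    exact Rat.not_irrational _ hirr

end Stmt3Aux

open Stmt3Aux in
/-- Corollary 1 (irrational case): if `0 < α < β` and `α/β` is irrational, then for
every `x ∈ [0, β]` the orbit of `x` under `f_α, f_β` is dense in `[0, β]`. -/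
theorem stmt_3 (α β : ℝ) (hα : 0 < α) (hαβ : α < β) (hirr : Irrational (α / β))
    (x : ℝ) (hx : x ∈ Set.Icc 0 β) :
    Set.Icc 0 β ⊆ closure (orbit α β x) := by
  have hβ : 0 < β := hα.trans hαβ
  have hIco : Set.Ico 0 β ⊆ closure (orbit α β x) := by
    rintro y ⟨hy0, hyβ⟩
    rw [Metric.mem_closure_iff]
    intro ε hε
    set ε₀ := min ε (β - y) with hε₀def
    have hε₀ : 0 < ε₀ := lt_min hε (by linarith)
    have hε₀ε : ε₀ ≤ ε := min_le_left _ _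
    have hε₀y : ε₀ ≤ β - y := min_le_right _ _
    obtain ⟨m, n, hs0, hsε⟩ := exists_small hα hβ hirr hε₀
    set s := (m : ℝ) * α + n * β with hsdef
    have hsβ : s < β := lt_of_lt_of_le hsε (by linarith)
    have hm : m ≠ 0 := by
      rintro rfl
      rw [hsdef] at hs0 hsβ
      push_cast at hs0 hsβ
      rcases le_or_gt n 0 with h | h
      · have : (n : ℝ) * β ≤ 0 :=
          mul_nonpos_of_nonpos_of_nonneg (by exact_mod_cast h) hβ.le
        linarith
      · have h1 : (1 : ℝ) ≤ n := by exact_mod_cast h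
        have : β ≤ (n : ℝ) * β := le_mul_of_one_le_left hβ.le h1
        linarith
    rcases hm.lt_or_gt with hmneg | hmpos
    · -- m < 0 : step backwards
      set d : ℕ := (-m).toNat with hd
      have hdm : ((d : ℕ) : ℝ) = -(m : ℝ) := by
        have : ((d : ℕ) : ℤ) = -m := Int.toNat_of_nonneg (by omega)
        exact_mod_cast this
      set m' : ℤ := ⌈(x - y) / β⌉ - 1 with hm'
      set z := y + (m' : ℝ) * β with hz
      have hzx : z < x := by
        have h1 : ((m' : ℝ)) < (x - y) / β := by
          have := Int.ceil_lt_add_one ((x - y) / β)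
          push_cast [hm']; push_cast at this; linarith
        have := (lt_div_iff₀ hβ).mp h1
        rw [hz]; linarith
      set k : ℕ := (⌈(x - z) / s⌉ - 1).toNat with hk
      have hcge : (1 : ℤ) ≤ ⌈(x - z) / s⌉ := by
        apply Int.one_le_ceil_iff.mpr
        exact div_pos (by linarith) hs0
      have hkc : ((k : ℕ) : ℝ) = (⌈(x - z) / s⌉ : ℝ) - 1 := by
        have : ((k : ℕ) : ℤ) = ⌈(x - z) / s⌉ - 1 := Int.toNat_of_nonneg (by omega)
        exact_mod_cast this
      have hb1 : (k : ℝ) * s < x - z := by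
        have h1 : (⌈(x - z) / s⌉ : ℝ) - 1 < (x - z) / s := by
          have := Int.ceil_lt_add_one ((x - z) / s); linarith
        rw [hkc]
        calc ((⌈(x - z) / s⌉ : ℝ) - 1) * s < ((x - z) / s) * s :=
              mul_lt_mul_of_pos_right h1 hs0
        _ = x - z := div_mul_cancel₀ _ hs0.ne'
      have hb2 : x - z - s ≤ (k : ℝ) * s := by
        have h1 : (x - z) / s ≤ (⌈(x - z) / s⌉ : ℝ) := Int.le_ceil _
        rw [hkc]
        have : x - z ≤ (⌈(x - z) / s⌉ : ℝ) * s := by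
          calc x - z = ((x - z) / s) * s := (div_mul_cancel₀ _ hs0.ne').symm
          _ ≤ _ := mul_le_mul_of_nonneg_right h1 hs0.le
        nlinarith
      -- the folded value
      have hval : F β (x - k * s) = x - k * s - m' * β :=
        F_eq_of hβ m' (by linarith) (by linarith)
      have horb : F β (x - k * s) ∈ orbit α β x := by
        have e : x + ((k * d : ℕ) : ℝ) * α = (x - k * s) + ((k * n : ℤ) : ℝ) * β := by
          push_cast [hdm, hsdef]; ring
        have h2 := key_orbit hα hαβ hx (k * d)
        rwa [e, F_add_int_mul hβ] at h2
      refine ⟨F β (x - k * s), horb, ?_⟩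
      rw [Real.dist_eq, hval, abs_lt]
      constructor
      · linarith
      · linarith
    · -- m > 0 : step forwards
      set d : ℕ := m.toNat with hd
      have hdm : ((d : ℕ) : ℝ) = (m : ℝ) := by
        have : ((d : ℕ) : ℤ) = m := Int.toNat_of_nonneg (by omega)
        exact_mod_cast this
      set m' : ℤ := ⌈(x - y) / β⌉ with hm'
      set z := y + (m' : ℝ) * β with hz
      have hxz : x ≤ z := by
        have h1 : (x - y) / β ≤ (m' : ℝ) := Int.le_ceil _
        have := (div_le_iff₀ hβ).mp h1
        rw [hz]; linarith
      set k : ℕ := ⌈(z - x) / s⌉.toNat with hk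
      have hkc : ((k : ℕ) : ℝ) = (⌈(z - x) / s⌉ : ℝ) := by
        have h0 : (0 : ℤ) ≤ ⌈(z - x) / s⌉ := Int.ceil_nonneg (div_nonneg (by linarith) hs0.le)
        have : ((k : ℕ) : ℤ) = ⌈(z - x) / s⌉ := Int.toNat_of_nonneg h0
        exact_mod_cast this
      have hb1 : z - x ≤ (k : ℝ) * s := by
        have h1 : (z - x) / s ≤ (⌈(z - x) / s⌉ : ℝ) := Int.le_ceil _
        rw [hkc]
        calc z - x = ((z - x) / s) * s := (div_mul_cancel₀ _ hs0.ne').symm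
        _ ≤ _ := mul_le_mul_of_nonneg_right h1 hs0.le
      have hb2 : (k : ℝ) * s < z - x + s := by
        have h1 : (⌈(z - x) / s⌉ : ℝ) < (z - x) / s + 1 := Int.ceil_lt_add_one _
        rw [hkc]
        calc (⌈(z - x) / s⌉ : ℝ) * s < ((z - x) / s + 1) * s :=
              mul_lt_mul_of_pos_right h1 hs0
        _ = z - x + s := by rw [add_mul, div_mul_cancel₀ _ hs0.ne', one_mul]
      have hval : F β (x + k * s) = x + k * s - m' * β :=
        F_eq_of hβ m' (by linarith) (by linarith)
      have horb : F β (x + k * s) ∈ orbit α β x := by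
        have e : x + ((k * d : ℕ) : ℝ) * α = (x + k * s) + ((-(k * n) : ℤ) : ℝ) * β := by
          push_cast [hdm, hsdef]; ring
        have h2 := key_orbit hα hαβ hx (k * d)
        rwa [e, F_add_int_mul hβ] at h2
      refine ⟨F β (x + k * s), horb, ?_⟩
      rw [Real.dist_eq, hval, abs_lt]
      constructor
      · linarith
      · linarith
  intro y hy
  have h1 : Set.Icc 0 β = closure (Set.Ico 0 β) := (closure_Ico (ne_of_lt hβ)).symm
  rw [h1] at hy
  exact closure_minimal hIco isClosed_closure hy
end

section
/- Let 0 < α < β with α/β = p/q for relatively prime positive integers p, q. Then for every x ∈ [0, β], the orbit of x under finite compositions of f_α(y) = |α − y| and f_β(y) = |β − y| intersects every closed subinterval of [0, β] of length at least β/q. -/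
lemma orbit_self (a b x : ℝ) : x ∈ orbit a b x :=
  ⟨[], by simp, by simp⟩

lemma orbit_fa {a b x y : ℝ} (h : y ∈ orbit a b x) : |a - y| ∈ orbit a b x := by
  obtain ⟨l, hl, hy⟩ := h
  refine ⟨l ++ [a], ?_, ?_⟩
  · intro θ hθ
    rcases List.mem_append.1 hθ with h | h
    · exact hl θ h
    · simp at h; exact Or.inl h
  · rw [List.foldl_append, ← hy]; simp

lemma orbit_fb {a b x y : ℝ} (h : y ∈ orbit a b x) : |b - y| ∈ orbit a b x := by
  obtain ⟨l, hl, hy⟩ := h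
  refine ⟨l ++ [b], ?_, ?_⟩
  · intro θ hθ
    rcases List.mem_append.1 hθ with h | h
    · exact hl θ h
    · simp at h; exact Or.inr h
  · rw [List.foldl_append, ← hy]; simp

lemma orbit_key (α β x : ℝ) (hα : 0 < α) (hαβ : α < β) (hx : x ∈ Set.Icc 0 β) :
    ∀ n : ℕ, ∃ w ∈ orbit α β x, w ∈ Set.Ico 0 β ∧ ∃ j : ℤ, w = x + n * α - j * β := by
  intro n
  induction n with
  | zero =>
    rcases eq_or_lt_of_le hx.2 with h | h
    · refine ⟨0, ?_, ⟨le_refl 0, by linarith⟩, 1, by push_cast; rw [← h]; ring⟩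
      have h0 := orbit_fb (orbit_self α β x)
      have e : |β - x| = 0 := by rw [← h, sub_self, abs_zero]
      rwa [e] at h0
    · exact ⟨x, orbit_self α β x, ⟨hx.1, h⟩, 0, by push_cast; ring⟩
  | succ n ih =>
    obtain ⟨w, hw, ⟨hw0, hwβ⟩, j, hj⟩ := ih
    by_cases hc : w < β - α
    · refine ⟨w + α, ?_, ⟨by linarith, by linarith⟩, j, by push_cast [hj]; ring⟩
      have h1 := orbit_fb hw
      rw [abs_of_nonneg (by linarith : (0:ℝ) ≤ β - w)] at h1
      have h2 := orbit_fa h1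
      rw [abs_of_nonpos (by linarith : α - (β - w) ≤ 0)] at h2
      have h3 := orbit_fb h2
      rw [show β - -(α - (β - w)) = w + α by ring] at h3
      rwa [abs_of_nonneg (by linarith : (0:ℝ) ≤ w + α)] at h3
    · push_neg at hc
      refine ⟨w + α - β, ?_, ⟨by linarith, by linarith⟩, j + 1, by push_cast [hj]; ring⟩
      have h1 := orbit_fb hw
      rw [abs_of_nonneg (by linarith : (0:ℝ) ≤ β - w)] at h1
      have h2 := orbit_fa h1
      rw [abs_of_nonneg (by linarith : (0:ℝ) ≤ α - (β - w))] at h2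
      rwa [show α - (β - w) = w + α - β by ring] at h2

/-- Corollary 1 (rational case): if `0 < α < β` and `α/β = p/q` in lowest terms, then
for every `x ∈ [0, β]` the orbit of `x` under `f_α, f_β` meets every closed
subinterval of `[0, β]` of length at least `β/q`. -/
theorem stmt_4 (α β : ℝ) (hα : 0 < α) (hαβ : α < β) (p q : ℕ) (hp : 0 < p) (hq : 0 < q)
    (hcop : Nat.Coprime p q) (hratio : α / β = (p : ℝ) / q)
    (x : ℝ) (hx : x ∈ Set.Icc 0 β)
    (u v : ℝ) (hu : 0 ≤ u) (hv : v ≤ β) (hlen : β / q ≤ v - u) :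
    (orbit α β x ∩ Set.Icc u v).Nonempty := by
  have hβ : (0:ℝ) < β := lt_trans hα hαβ
  have hq0 : (0:ℝ) < (q:ℝ) := by exact_mod_cast hq
  haveI : NeZero q := ⟨hq.ne'⟩
  -- α = p * β / q
  have hαval : α = (p:ℝ) * β / q := by
    field_simp at hratio
    field_simp
    linarith [hratio]
  -- choose the integer M
  set M : ℤ := ⌈(u - x) * q / β⌉ with hM
  have hM1 : (u - x) * q / β ≤ (M:ℝ) := Int.le_ceil _
  have hM2 : (M:ℝ) < (u - x) * q / β + 1 := Int.ceil_lt_add_one _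
  set P : ℝ := x + (M:ℝ) * β / q with hP
  have hPu : u ≤ P := by
    have : (u - x) * q / β * (β / q) ≤ (M:ℝ) * (β / q) := by
      apply mul_le_mul_of_nonneg_right hM1
      positivity
    have e : (u - x) * q / β * (β / q) = u - x := by field_simp
    rw [e, mul_div_assoc'] at this
    rw [hP]; linarith
  have hPv : P ≤ v := by
    have : (M:ℝ) * (β / q) ≤ ((u - x) * q / β + 1) * (β / q) := by
      apply mul_le_mul_of_nonneg_right hM2.le
      positivity
    have e : ((u - x) * q / β + 1) * (β / q) = u - x + β / q := by field_simp
    rw [e, mul_div_assoc'] at this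
    rw [hP]; linarith
  -- choose n with n * p ≡ M (mod q)
  have hup : IsUnit ((p : ZMod q)) := (ZMod.isUnit_iff_coprime p q).2 hcop
  set n : ℕ := ((M : ZMod q) * (p : ZMod q)⁻¹).val with hn
  have hdvd : (q:ℤ) ∣ ((n:ℤ) * p - M) := by
    have h1 : ((n : ZMod q)) = (M : ZMod q) * (p : ZMod q)⁻¹ := by
      rw [hn, ZMod.natCast_val, ZMod.cast_id]
    have h2 : ((n : ZMod q)) * (p : ZMod q) = (M : ZMod q) := by
      rw [h1, mul_assoc, ZMod.inv_mul_of_unit _ hup, mul_one]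
    have h3 : (((n : ℤ) * p - M : ℤ) : ZMod q) = 0 := by
      push_cast
      rw [h2]; ring
    exact (ZMod.intCast_zmod_eq_zero_iff_dvd _ _).1 h3
  obtain ⟨j, hj⟩ := hdvd
  have hreal : (n:ℝ) * p - (M:ℝ) = (q:ℝ) * j := by exact_mod_cast hj
  have hPval : P = x + (n:ℝ) * α - (j:ℝ) * β := by
    have hMr : ((n:ℝ) * (p:ℝ) - (q:ℝ) * (j:ℝ)) = (M:ℝ) := by linarith
    have e3 : (n:ℝ) * ((p:ℝ) * β / q) - (j:ℝ) * β = ((n:ℝ) * (p:ℝ) - (q:ℝ) * (j:ℝ)) * β / q := by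
      field_simp
    rw [hMr] at e3
    rw [hP, hαval]
    linarith
  obtain ⟨w, hw, ⟨hw0, hwβ⟩, j', hj'⟩ := orbit_key α β x hα hαβ hx n
  have hdiff : P - w = ((j' - j : ℤ):ℝ) * β := by
    push_cast
    rw [hPval, hj']; ring
  have hk1 : (j' - j : ℤ) ≤ 1 := by
    by_contra hcon
    push_neg at hcon
    have : (2:ℝ) ≤ ((j' - j : ℤ):ℝ) := by exact_mod_cast hcon
    nlinarith [hdiff, hPv, hw0]
  have hk0 : (0:ℤ) ≤ j' - j := by
    by_contra hcon
    push_neg at hcon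
    have h1 : (j' - j : ℤ) ≤ -1 := by omega
    have : ((j' - j : ℤ):ℝ) ≤ -1 := by exact_mod_cast h1
    nlinarith [hdiff, hPu, hwβ]
  rcases (by omega : j' - j = 0 ∨ j' - j = 1) with hk | hk
  · rw [hk] at hdiff
    norm_num at hdiff
    refine ⟨w, hw, ?_, ?_⟩ <;> linarith
  · rw [hk] at hdiff
    norm_num at hdiff
    have hwz : w = 0 := by linarith
    have h0 := orbit_fb hw
    rw [hwz, sub_zero, abs_of_pos hβ] at h0
    exact ⟨β, h0, by linarith, by linarith⟩
end

section
/- Let μ be a probability distribution supported on a bounded interval Y ⊂ ℝ₊, and suppose μ is not supported on any lattice {nc : n ∈ ℤ} for any real c. Then for every bounded interval I ⊂ ℝ₊ and every ε > 0, there exist N and intervals J_1, …, J_N each of positive μ-measure, such that for all (θ_1, …, θ_N) ∈ J_1 × ⋯ × J_N, the length of f_{θ_N}∘⋯∘f_{θ_1}(I) is less than ε. -/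
/-!
Two folds `f_θ(x) = |θ - x|` compose to a third on an initial segment: `f_a ∘ f_b` is
`f_{b - a}` on `[0, b]`. Starting from points of increase of `μ`, the subtractive Euclidean
algorithm therefore realises folds `f_s` by words of points of increase, and repeated folding
by `f_s` squeezes any `[0, M]` into `[0, s]`. If `μ` is not supported on a lattice, either two
points of increase are `δ`-close, which gives `s < δ` at once, or two of them have irrational
ratio; then the Euclidean algorithm never stops, and since every step lowers the sum of the
pair by its smaller entry, that entry eventually drops below `δ`. Finally, a composition of
folds is `1`-Lipschitz in each parameter, so parameters taken in small intervals around the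
letters of the word (which have positive measure) squeeze `I` just as well.
-/

open MeasureTheory Set

namespace AbsFold

-- The first letter of `W` acts first: `comp [w₁, …, wₙ] = f_{wₙ} ∘ ⋯ ∘ f_{w₁}`.
def comp (W : List ℝ) (x : ℝ) : ℝ := W.foldl (fun z t => |t - z|) x

lemma comp_append (V W : List ℝ) : comp (V ++ W) = comp W ∘ comp V :=
  funext fun _ => List.foldl_append

def Realizes (S : Set ℝ) (c D : ℝ) : Prop :=
  ∃ W : List ℝ, (∀ w ∈ W, w ∈ S) ∧ EqOn (comp W) (fun x => |c - x|) (Icc 0 D)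

def Squeezes (S : Set ℝ) (M t : ℝ) : Prop :=
  ∃ W : List ℝ, (∀ w ∈ W, w ∈ S) ∧ MapsTo (comp W) (Icc 0 M) (Icc 0 t)

variable {S : Set ℝ}

namespace Squeezes

lemma of_le {M t : ℝ} (h : M ≤ t) : Squeezes S M t :=
  ⟨[], by simp, fun _ hx => ⟨hx.1, hx.2.trans h⟩⟩

lemma trans {M t u : ℝ} (h₁ : Squeezes S M t) (h₂ : Squeezes S t u) : Squeezes S M u := by
  obtain ⟨V, hVS, hV⟩ := h₁
  obtain ⟨W, hWS, hW⟩ := h₂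
  exact ⟨V ++ W, List.forall_mem_append.2 ⟨hVS, hWS⟩, comp_append V W ▸ hW.comp hV⟩

end Squeezes

namespace Realizes

lemma of_mem {c : ℝ} (hc : c ∈ S) (D : ℝ) : Realizes S c D :=
  ⟨[c], by simpa using hc, fun _ _ => rfl⟩

lemma mono {c D D' : ℝ} (h : Realizes S c D) (hD : D' ≤ D) : Realizes S c D' :=
  let ⟨W, hWS, hW⟩ := h
  ⟨W, hWS, hW.mono (Icc_subset_Icc_right hD)⟩

lemma sub {a b Da : ℝ} (ha : Realizes S a Da) (hb : Realizes S b b) (hbDa : b ≤ Da) :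
    Realizes S (b - a) b := by
  obtain ⟨Wa, hWaS, hWa⟩ := ha
  obtain ⟨Wb, hWbS, hWb⟩ := hb
  refine ⟨Wb ++ Wa, List.forall_mem_append.2 ⟨hWbS, hWaS⟩, fun x hx => ?_⟩
  have hbx : |b - x| = b - x := abs_of_nonneg (sub_nonneg.2 hx.2)
  have hbx_mem : b - x ∈ Icc 0 Da := ⟨sub_nonneg.2 hx.2, by linarith [hx.1]⟩
  simp only [comp_append, Function.comp_apply, hWb hx, hbx, hWa hbx_mem]
  rw [abs_sub_comm]
  ring_nf

lemma squeezes_max {s D M : ℝ} (h : Realizes S s D) (hM : M ≤ D) :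
    Squeezes S M (max s (M - s)) := by
  obtain ⟨W, hWS, hW⟩ := h
  refine ⟨W, hWS, fun x hx => ?_⟩
  rw [hW (Icc_subset_Icc_right hM hx)]
  exact ⟨abs_nonneg _, abs_sub_le_iff.2
    ⟨le_max_of_le_left (by linarith [hx.1]), le_max_of_le_right (by linarith [hx.2])⟩⟩

lemma squeezes {s D M : ℝ} (h : Realizes S s D) (hs : 0 < s) (hM : M ≤ D) :
    Squeezes S M s := by
  have key : ∀ n : ℕ, ∀ M ≤ D, M ≤ s + n * s → Squeezes S M s := by
    intro n
    induction n with
    | zero => exact fun M _ hMs => .of_le (by simpa using hMs)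
    | succ n ih =>
      intro M hMD hMs
      rcases le_or_gt M s with hMs' | hsM
      · exact .of_le hMs'
      refine (h.squeezes_max hMD).trans (ih _ (max_le (by linarith) (by linarith)) ?_)
      push_cast at hMs
      exact max_le (le_add_of_nonneg_right (by positivity)) (by linarith)
  obtain ⟨n, hn⟩ := Archimedean.arch M hs
  exact key n M hM (by rw [nsmul_eq_mul] at hn; linarith)

end Realizes

-- The subtractive Euclidean algorithm on `(s, r)`: while `δ ≤ s`, each step lowers `s + r`
-- by `s`, so `n` bounds the number of steps.
lemma squeezes_of_irrational_of_add_le {δ : ℝ} (n : ℕ) {s r : ℝ} (hs : 0 < s) (hsr : s < r)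
    (hirr : Irrational (r / s)) (hsr_fold : Realizes S s r) (hr_fold : Realizes S r r)
    (hn : s + r ≤ n * δ) : Squeezes S r δ := by
  induction n generalizing s r with
  | zero => rw [Nat.cast_zero, zero_mul] at hn; linarith
  | succ n ih =>
    rcases lt_or_ge s δ with hsδ | hδs
    · exact (hsr_fold.squeezes hs le_rfl).trans (.of_le hsδ.le)
    have hdiff : Realizes S (r - s) r := hsr_fold.sub hr_fold le_rfl
    have hstep : Squeezes S r (max s (r - s)) := hsr_fold.squeezes_max le_rfl
    have hirr' : Irrational ((r - s) / s) := by
      rw [sub_div, div_self hs.ne']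
      simpa using hirr.sub_natCast 1
    have hne : r - s ≠ s := fun h => hirr.ne_ofNat 2 (by field_simp; linarith)
    push_cast at hn
    rcases hne.lt_or_gt with hlt | hgt
    · rw [max_eq_left hlt.le] at hstep
      exact hstep.trans <| ih (by linarith) hlt (by simpa [inv_div] using hirr'.inv)
        (hdiff.mono hsr.le) (hsr_fold.mono hsr.le) (by linarith)
    · rw [max_eq_right hgt.le] at hstep
      exact hstep.trans <| ih hs hgt hirr' (hsr_fold.mono (by linarith))
        (hdiff.mono (by linarith)) (by linarith)

lemma squeezes_of_lt_of_sub_le {p q δ : ℝ} (hp : p ∈ S) (hq : q ∈ S) (hq0 : 0 < q)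
    (hpq : p < q) (hqp : q - p ≤ δ) (M : ℝ) : Squeezes S M δ :=
  ((Realizes.of_mem hq M).squeezes hq0 le_rfl).trans <|
    (((Realizes.of_mem hp q).sub (.of_mem hq q) le_rfl).squeezes (sub_pos.2 hpq) le_rfl).trans
      (.of_le hqp)

lemma squeezes_of_irrational_div {p q δ : ℝ} (hp : p ∈ S) (hq : q ∈ S) (hp0 : 0 < p)
    (hq0 : 0 < q) (hirr : Irrational (q / p)) (hδ : 0 < δ) (M : ℝ) : Squeezes S M δ := by
  wlog hpq : p < q generalizing p q
  · refine this hq hp hq0 hp0 (by simpa [inv_div] using hirr.inv) ?_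
    exact (not_lt.1 hpq).lt_of_ne fun h => hirr.ne_one (by rw [h, div_self hp0.ne'])
  obtain ⟨n, hn⟩ := Archimedean.arch (p + q) hδ
  exact ((Realizes.of_mem hq M).squeezes hq0 le_rfl).trans <|
    squeezes_of_irrational_of_add_le n hp0 hpq hirr (.of_mem hp q) (.of_mem hq q)
      (by rwa [nsmul_eq_mul] at hn)

lemma comp_abs_sub_le {η : ℝ} {V W : List ℝ} (h : List.Forall₂ (fun a b => |a - b| ≤ η) V W)
    (x y : ℝ) : |comp V x - comp W y| ≤ |x - y| + V.length * η := by
  induction h generalizing x y with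
  | nil => simp [comp]
  | @cons a b V W hab _ ih =>
    calc |comp (a :: V) x - comp (b :: W) y| = |comp V (|a - x|) - comp W (|b - y|)| := rfl
      _ ≤ |(|a - x|) - (|b - y|)| + V.length * η := ih _ _
      _ ≤ |(a - b) - (x - y)| + V.length * η := by
          rw [← sub_sub_sub_comm]
          exact add_le_add_left (abs_abs_sub_abs_le_abs_sub _ _) _
      _ ≤ |x - y| + (a :: V).length * η := by
          push_cast [List.length_cons]
          linarith [abs_sub (a - b) (x - y)]

lemma comp_ofFn_abs_sub_le {η : ℝ} {W : List ℝ} {θ : Fin W.length → ℝ}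
    (hθ : ∀ i, |θ i - W.get i| ≤ η) (x : ℝ) :
    |comp (List.ofFn θ) x - comp W x| ≤ W.length * η := by
  have hθW : List.Forall₂ (fun a b => |a - b| ≤ η) (List.ofFn θ) W :=
    List.forall₂_iff_get.2 ⟨by simp, fun i _ h => by simpa using hθ ⟨i, h⟩⟩
  simpa using comp_abs_sub_le hθW x x

end AbsFold

lemma Set.Infinite.exists_lt_sub_lt_of_subset_Icc {s : Set ℝ} {a b δ : ℝ} (hs : s.Infinite)
    (hsub : s ⊆ Icc a b) (hδ : 0 < δ) : ∃ p ∈ s, ∃ q ∈ s, p < q ∧ q - p < δ := by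
  have hmaps : MapsTo (fun x => ⌊x / δ⌋) s (Icc ⌊a / δ⌋ ⌊b / δ⌋) := fun x hx =>
    ⟨Int.floor_le_floor (by gcongr; exact (hsub hx).1),
      Int.floor_le_floor (by gcongr; exact (hsub hx).2)⟩
  obtain ⟨x, hx, y, hy, hxy, hfloor⟩ := hs.exists_ne_map_eq_of_mapsTo hmaps (finite_Icc _ _)
  have hclose : |x - y| < δ := by
    have := Int.abs_sub_lt_one_of_floor_eq_floor hfloor
    rwa [← sub_div, abs_div, abs_of_pos hδ, div_lt_one hδ] at this
  rcases hxy.lt_or_gt with h | h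
  · exact ⟨x, hx, y, hy, h, by rw [abs_sub_comm] at hclose; exact (le_abs_self _).trans_lt hclose⟩
  · exact ⟨y, hy, x, hx, h, (le_abs_self _).trans_lt hclose⟩

lemma Set.Finite.exists_subset_zmultiples {S : Set ℝ} (hS : S.Finite)
    (hrat : ∀ p ∈ S, ∀ q ∈ S, p ≠ 0 → q ≠ 0 → ¬Irrational (q / p)) :
    ∃ c : ℝ, S ⊆ {x | ∃ n : ℤ, x = n * c} := by
  by_cases h0 : ∃ x₀ ∈ S, x₀ ≠ 0
  swap
  · push Not at h0
    exact ⟨0, fun x hx => ⟨0, by simp [h0 x hx]⟩⟩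
  obtain ⟨x₀, hx₀, hx₀0⟩ := h0
  have hρ : ∀ y, ∃ ρ : ℚ, y ∈ S → y = ρ * x₀ := by
    intro y
    by_cases hy : y ∈ S ∧ y ≠ 0
    · obtain ⟨ρ, hρ⟩ := not_not.1 (hrat x₀ hx₀ y hy.1 hx₀0 hy.2)
      exact ⟨ρ, fun _ => by rw [hρ]; field_simp⟩
    · exact ⟨0, fun hyS => by simpa using not_and.1 hy hyS⟩
  choose ρ hρ using hρ
  -- a common denominator of the ratios `y / x₀`
  set D := ∏ y ∈ hS.toFinset, (ρ y).den
  have hD : (D : ℝ) ≠ 0 := by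
    exact_mod_cast Finset.prod_ne_zero_iff.2 fun y _ => (ρ y).den_nz
  refine ⟨x₀ / D, fun y hy => ?_⟩
  obtain ⟨k, hk⟩ : (ρ y).den ∣ D := Finset.dvd_prod_of_mem _ (hS.mem_toFinset.2 hy)
  have hnum : (ρ y : ℝ) * D = (ρ y).num * k := by
    rw [hk]
    push_cast
    rw [← mul_assoc]
    exact_mod_cast congrArg (fun q : ℚ => q * k) (Rat.mul_den_eq_num (ρ y))
  refine ⟨(ρ y).num * k, ?_⟩
  push_cast
  calc y = ρ y * x₀ := hρ y hy
    _ = ρ y * D * (x₀ / D) := by field_simp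
    _ = _ := by rw [hnum]

namespace MeasureTheory

variable {μ : Measure ℝ} [IsProbabilityMeasure μ]

lemma support_subset_Icc_of_measure_eq_one {a b : ℝ} (h : μ (Icc a b) = 1) :
    μ.support ⊆ Icc a b :=
  Measure.support_subset_of_isClosed isClosed_Icc
    (by rwa [mem_ae_iff, prob_compl_eq_zero_iff measurableSet_Icc])

lemma measure_eq_one_of_support_subset {s : Set ℝ} (h : μ.support ⊆ s) : μ s = 1 :=
  (measure_congr (ae_eq_univ.2 (measure_mono_null (compl_subset_compl.2 h)
    Measure.measure_compl_support))).trans measure_univ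

lemma exists_close_or_irrational_of_not_lattice {b δ : ℝ} (hsupp : μ (Icc 0 b) = 1)
    (hlat : ¬ ∃ c : ℝ, μ {x | ∃ n : ℤ, x = n * c} = 1) (hδ : 0 < δ) :
    (∃ p ∈ μ.support, ∃ q ∈ μ.support, p < q ∧ q - p < δ) ∨
      ∃ p ∈ μ.support, ∃ q ∈ μ.support, 0 < p ∧ 0 < q ∧ Irrational (q / p) := by
  have hsub := support_subset_Icc_of_measure_eq_one hsupp
  by_contra! h
  obtain ⟨hclose, hirr⟩ := h
  have hfin : μ.support.Finite := by
    by_contra hinf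
    obtain ⟨p, hp, q, hq, hpq, hqp⟩ := Set.Infinite.exists_lt_sub_lt_of_subset_Icc hinf hsub hδ
    exact (hclose p hp q hq hpq).not_gt hqp
  obtain ⟨c, hc⟩ := hfin.exists_subset_zmultiples fun p hp q hq hp0 hq0 =>
    hirr p hp q hq ((hsub hp).1.lt_of_ne' hp0) ((hsub hq).1.lt_of_ne' hq0)
  exact hlat ⟨c, measure_eq_one_of_support_subset hc⟩

lemma squeezes_support_of_not_lattice {b : ℝ} (hsupp : μ (Icc 0 b) = 1)
    (hlat : ¬ ∃ c : ℝ, μ {x | ∃ n : ℤ, x = n * c} = 1) (M : ℝ) {δ : ℝ} (hδ : 0 < δ) :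
    AbsFold.Squeezes μ.support M δ := by
  rcases exists_close_or_irrational_of_not_lattice hsupp hlat hδ with
    ⟨p, hp, q, hq, hpq, hqp⟩ | ⟨p, hp, q, hq, hp0, hq0, hirr⟩
  · have hq0 : 0 < q := ((support_subset_Icc_of_measure_eq_one hsupp hp).1).trans_lt hpq
    exact AbsFold.squeezes_of_lt_of_sub_le hp hq hq0 hpq hqp.le M
  · exact AbsFold.squeezes_of_irrational_div hp hq hp0 hq0 hirr hδ M

end MeasureTheory

theorem stmt_6_general (μ : Measure ℝ) [IsProbabilityMeasure μ] (b : ℝ)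
    (hsupp : μ (Set.Icc 0 b) = 1)
    (hlat : ¬ ∃ c : ℝ, μ {x | ∃ n : ℤ, x = n * c} = 1)
    (a₁ b₁ : ℝ) (ha₁ : 0 ≤ a₁) (ε : ℝ) (hε : 0 < ε) :
    ∃ (N : ℕ) (J : Fin N → Set ℝ),
      (∀ i, ∃ u v : ℝ, u < v ∧ J i = Set.Ioo u v) ∧
      (∀ i, 0 < μ (J i)) ∧
      ∀ θ : Fin N → ℝ, (∀ i, θ i ∈ J i) →
        Metric.diam
          ((fun x => (List.ofFn θ).foldl (fun z t => |t - z|) x) '' Set.Icc a₁ b₁) < ε := by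
  obtain ⟨W, hWS, hW⟩ := squeezes_support_of_not_lattice hsupp hlat b₁ (half_pos hε)
  set η := ε / 8 / (W.length + 1)
  have hη : 0 < η := by positivity
  have hWη : W.length * η ≤ ε / 8 := by
    have : (W.length + 1) * η = ε / 8 := mul_div_cancel₀ _ (by positivity)
    linarith
  refine ⟨W.length, fun i => Ioo (W.get i - η) (W.get i + η),
    fun i => ⟨_, _, by linarith, rfl⟩, fun i => ?_, fun θ hθ => ?_⟩
  · exact (Measure.mem_support_iff_forall _).1 (hWS _ (List.get_mem W i)) _
      (Ioo_mem_nhds (by linarith) (by linarith))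
  have hθW (i : Fin W.length) : |θ i - W.get i| ≤ η :=
    abs_sub_le_iff.2 ⟨by linarith [(hθ i).2], by linarith [(hθ i).1]⟩
  have himage : AbsFold.comp (List.ofFn θ) '' Icc a₁ b₁ ⊆ Icc (-(ε / 8)) (ε / 2 + ε / 8) := by
    rintro _ ⟨x, hx, rfl⟩
    have hclose := abs_le.1 (AbsFold.comp_ofFn_abs_sub_le hθW x)
    have hx' := hW ⟨ha₁.trans hx.1, hx.2⟩
    exact ⟨by linarith [hx'.1], by linarith [hx'.2]⟩
  calc Metric.diam (AbsFold.comp (List.ofFn θ) '' Icc a₁ b₁)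
      ≤ Metric.diam (Icc (-(ε / 8)) (ε / 2 + ε / 8)) :=
        Metric.diam_mono himage (Metric.isBounded_Icc _ _)
    _ = 3 * ε / 4 := by rw [Real.diam_Icc (by linarith)]; ring
    _ < ε := by linarith

/-- Lemma 4: if `μ` is a probability measure supported on a bounded interval in `ℝ₊`
and not supported on any lattice `{nc : n ∈ ℤ}`, then for every bounded interval
`I ⊆ ℝ₊` and every `ε > 0` there are finitely many intervals `J₁, …, J_N` of positive
`μ`-measure such that for all `(θ₁, …, θ_N) ∈ J₁ × ⋯ × J_N` the image
`f_{θ_N} ∘ ⋯ ∘ f_{θ₁} (I)` has length less than `ε`, where `f_θ(x) = |θ - x|`. -/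
theorem stmt_6 (μ : Measure ℝ) [IsProbabilityMeasure μ] (b : ℝ) (hb : 0 ≤ b)
    (hsupp : μ (Set.Icc 0 b) = 1)
    (hlat : ¬ ∃ c : ℝ, μ {x | ∃ n : ℤ, x = n * c} = 1)
    (a₁ b₁ : ℝ) (ha₁ : 0 ≤ a₁) (hab₁ : a₁ ≤ b₁) (ε : ℝ) (hε : 0 < ε) :
    ∃ (N : ℕ) (J : Fin N → Set ℝ),
      (∀ i, ∃ u v : ℝ, u < v ∧ J i = Set.Ioo u v) ∧
      (∀ i, 0 < μ (J i)) ∧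
      ∀ θ : Fin N → ℝ, (∀ i, θ i ∈ J i) →
        Metric.diam
          ((fun x => (List.ofFn θ).foldl (fun z t => |t - z|) x) '' Set.Icc a₁ b₁) < ε :=
  stmt_6_general μ b hsupp hlat a₁ b₁ ha₁ ε hε
end

section
/- Let θ be a nonnegative random variable with distribution μ supported on a bounded subset of ℝ₊ and with positive finite expectation E(θ). Then the distribution π_μ on ℝ₊ with cumulative distribution function π_μ(x) = (1/E(θ)) ∫₀ˣ Pr{θ > y} dy is a stationary distribution for the Markov process x_{k+1} = |θ_{k+1} − x_k|, where the θ_k are i.i.d. with distribution μ. That is, if x_0 is distributed according to π_μ and θ_1 ~ μ is independent of x_0, then |θ_1 − x_0| is also distributed according to π_μ. -/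
open MeasureTheory
open scoped ENNReal

lemma aux_vol (l u t : ℝ) :
    volume (Set.Icc l u ∩ Set.Iio t) = ENNReal.ofReal (min u t - l) := by
  rcases le_or_gt t u with h | h
  · have hs : Set.Icc l u ∩ Set.Iio t = Set.Ico l t := by
      ext y
      simp only [Set.mem_inter_iff, Set.mem_Icc, Set.mem_Iio, Set.mem_Ico]
      constructor
      · rintro ⟨⟨h1, _⟩, h3⟩; exact ⟨h1, h3⟩
      · rintro ⟨h1, h2⟩; exact ⟨⟨h1, le_trans h2.le h⟩, h2⟩
    rw [hs, Real.volume_Ico, min_eq_right h]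
  · have hs : Set.Icc l u ∩ Set.Iio t = Set.Icc l u := by
      refine Set.inter_eq_left.2 fun y hy => ?_
      exact lt_of_le_of_lt hy.2 h
    rw [hs, Real.volume_Icc, min_eq_left h.le]

lemma aux_swap (μ : Measure ℝ) [IsFiniteMeasure μ] {s : Set ℝ} (hs : MeasurableSet s) :
    ∫⁻ y in s, μ (Set.Ioi y) ∂volume = ∫⁻ t, volume (s ∩ Set.Iio t) ∂μ := by
  have h1 : ∀ y : ℝ, μ (Set.Ioi y) = ∫⁻ t, (Set.Ioi y).indicator 1 t ∂μ :=
    fun y => (lintegral_indicator_one measurableSet_Ioi).symm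
  simp_rw [h1]
  rw [lintegral_lintegral_swap]
  · refine lintegral_congr fun t => ?_
    have h2 : ∀ y : ℝ, (Set.Ioi y).indicator (1 : ℝ → ℝ≥0∞) t
        = (Set.Iio t).indicator (1 : ℝ → ℝ≥0∞) y := by
      intro y
      by_cases h : y < t <;> simp [Set.indicator, h]
    simp_rw [h2]
    rw [lintegral_indicator_one measurableSet_Iio,
      Measure.restrict_apply measurableSet_Iio, Set.inter_comm]
  · have heq : (Function.uncurry fun y t => (Set.Ioi y).indicator (1 : ℝ → ℝ≥0∞) t)
        = Set.indicator {p : ℝ × ℝ | p.1 < p.2} 1 := by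
      ext p
      rcases p with ⟨y, t⟩
      by_cases h : y < t <;> simp [Function.uncurry, Set.indicator, h]
    rw [heq]
    exact (measurable_one.indicator (measurableSet_lt measurable_fst measurable_snd)).aemeasurable

set_option maxHeartbeats 1000000 in
lemma aux_key (a θ t : ℝ) (ha : 0 ≤ a) (hθ : 0 ≤ θ) (ht : 0 ≤ t) :
    ENNReal.ofReal (min (θ + a) t - max (θ - a) 0)
      + ENNReal.ofReal (min (t + a) θ - max (t - a) 0)
      = ENNReal.ofReal (min a θ) + ENNReal.ofReal (min a t) := by
  have h1 : ∀ x : ℝ, ENNReal.ofReal x = ENNReal.ofReal (max x 0) := by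
    intro x
    rcases le_total x 0 with h | h
    · rw [max_eq_right h, ENNReal.ofReal_eq_zero.2 h, ENNReal.ofReal_zero]
    · rw [max_eq_left h]
  rw [h1 (min (θ + a) t - max (θ - a) 0), h1 (min (t + a) θ - max (t - a) 0),
    ← ENNReal.ofReal_add (le_max_right _ _) (le_max_right _ _),
    ← ENNReal.ofReal_add (le_min ha hθ) (le_min ha ht)]
  congr 1
  simp only [min_def, max_def]
  split_ifs <;> linarith

lemma aux_core (μ : Measure ℝ) [IsProbabilityMeasure μ] (b a : ℝ) (ha : 0 ≤ a)
    (hae : ∀ᵐ t ∂μ, 0 ≤ t ∧ t ≤ b) :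
    ∫⁻ θ, ∫⁻ t, ENNReal.ofReal (min (θ + a) t - max (θ - a) 0) ∂μ ∂μ
      = ∫⁻ t, ENNReal.ofReal (min a t) ∂μ := by
  have hAc : Continuous fun p : ℝ × ℝ => min (p.1 + a) p.2 - max (p.1 - a) 0 :=
    ((continuous_fst.add continuous_const).min continuous_snd).sub
      ((continuous_fst.sub continuous_const).max continuous_const)
  have hAm : Measurable (Function.uncurry fun θ t : ℝ =>
      ENNReal.ofReal (min (θ + a) t - max (θ - a) 0)) :=
    ENNReal.measurable_ofReal.comp hAc.measurable
  have hAm2 : Measurable (Function.uncurry fun θ t : ℝ =>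
      ENNReal.ofReal (min (t + a) θ - max (t - a) 0)) :=
    hAm.comp measurable_swap
  have hKm : Measurable fun t : ℝ => ENNReal.ofReal (min a t) :=
    ENNReal.measurable_ofReal.comp (continuous_const.min continuous_id).measurable
  have hswap : ∫⁻ θ, ∫⁻ t, ENNReal.ofReal (min (θ + a) t - max (θ - a) 0) ∂μ ∂μ
      = ∫⁻ θ, ∫⁻ t, ENNReal.ofReal (min (t + a) θ - max (t - a) 0) ∂μ ∂μ :=
    lintegral_lintegral_swap hAm.aemeasurable
  have hdouble : (∫⁻ θ, ∫⁻ t, ENNReal.ofReal (min (θ + a) t - max (θ - a) 0) ∂μ ∂μ)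
      + (∫⁻ θ, ∫⁻ t, ENNReal.ofReal (min (θ + a) t - max (θ - a) 0) ∂μ ∂μ)
      = (∫⁻ t, ENNReal.ofReal (min a t) ∂μ) + (∫⁻ t, ENNReal.ofReal (min a t) ∂μ) := by
    nth_rewrite 2 [hswap]
    rw [← lintegral_add_left hAm.lintegral_prod_right]
    have step : ∀ᵐ θ ∂μ, ((∫⁻ t, ENNReal.ofReal (min (θ + a) t - max (θ - a) 0) ∂μ)
          + ∫⁻ t, ENNReal.ofReal (min (t + a) θ - max (t - a) 0) ∂μ)
        = ENNReal.ofReal (min a θ) + ∫⁻ t, ENNReal.ofReal (min a t) ∂μ := by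
      filter_upwards [hae] with θ hθ
      have hm1 : Measurable fun t : ℝ => ENNReal.ofReal (min (θ + a) t - max (θ - a) 0) :=
        ENNReal.measurable_ofReal.comp
          (((continuous_const.min continuous_id).sub continuous_const).measurable)
      calc (∫⁻ t, ENNReal.ofReal (min (θ + a) t - max (θ - a) 0) ∂μ)
            + ∫⁻ t, ENNReal.ofReal (min (t + a) θ - max (t - a) 0) ∂μ
          = ∫⁻ t, (ENNReal.ofReal (min (θ + a) t - max (θ - a) 0)
              + ENNReal.ofReal (min (t + a) θ - max (t - a) 0)) ∂μ :=
            (lintegral_add_left hm1 _).symm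
        _ = ∫⁻ t, (ENNReal.ofReal (min a θ) + ENNReal.ofReal (min a t)) ∂μ := by
            refine lintegral_congr_ae ?_
            filter_upwards [hae] with t ht
            exact aux_key a θ t ha hθ.1 ht.1
        _ = ENNReal.ofReal (min a θ) + ∫⁻ t, ENNReal.ofReal (min a t) ∂μ := by
            rw [lintegral_add_left measurable_const, lintegral_const, measure_univ, mul_one]
    rw [lintegral_congr_ae step, lintegral_add_left hKm, lintegral_const, measure_univ, mul_one]
  rw [← two_mul, ← two_mul] at hdouble
  exact (ENNReal.mul_right_inj two_ne_zero ENNReal.ofNat_ne_top).1 hdouble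

/-- The distribution `π_μ` with CDF `π_μ(x) = (1/E(θ)) ∫₀ˣ Pr{θ > y} dy` is stationary
for the process `x_{k+1} = |θ_{k+1} - x_k|`: if `X ~ π_μ` and `θ ~ μ` are independent,
then `|θ - X| ~ π_μ`. Here `μ` is a probability measure supported on a bounded subset
`[0, b]` of `ℝ₊` with positive expectation `E`. -/
theorem stmt_7 (μ : Measure ℝ) [IsProbabilityMeasure μ] (b : ℝ)
    (hsupp : μ (Set.Icc 0 b) = 1)
    (E : ℝ) (hE : E = ∫ θ, θ ∂μ) (hEpos : 0 < E)
    (π : Measure ℝ)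
    (hπ : π = (volume.restrict (Set.Ici 0)).withDensity
      (fun y => μ (Set.Ioi y) / ENNReal.ofReal E)) :
    Measure.map (fun p : ℝ × ℝ => |p.1 - p.2|) (μ.prod π) = π := by
  have hmf : Measurable fun p : ℝ × ℝ => |p.1 - p.2| :=
    (continuous_abs.comp (continuous_fst.sub continuous_snd)).measurable
  have hc0 : ENNReal.ofReal E ≠ 0 := (ENNReal.ofReal_pos.2 hEpos).ne'
  have hcT : (ENNReal.ofReal E)⁻¹ ≠ ⊤ := ENNReal.inv_ne_top.2 hc0
  have hπs : ∀ s : Set ℝ, MeasurableSet s →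
      π s = (∫⁻ y in s ∩ Set.Ici 0, μ (Set.Ioi y) ∂volume) * (ENNReal.ofReal E)⁻¹ := by
    intro s hs
    rw [hπ, withDensity_apply _ hs, Measure.restrict_restrict hs]
    simp_rw [div_eq_mul_inv]
    rw [lintegral_mul_const' _ _ hcT]
  have hae : ∀ᵐ t ∂μ, 0 ≤ t ∧ t ≤ b := by
    have hcomp : μ (Set.Icc 0 b)ᶜ = 0 := by
      rw [measure_compl measurableSet_Icc (measure_ne_top μ _), hsupp, measure_univ]
      simp
    filter_upwards [measure_eq_zero_iff_ae_notMem.1 hcomp] with t ht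
    simpa [Set.mem_Icc] using ht
  have hfinπ : IsFiniteMeasure π := by
    constructor
    rw [hπs Set.univ MeasurableSet.univ, Set.univ_inter,
      aux_swap μ measurableSet_Ici]
    have h2 : ∫⁻ t, volume (Set.Ici 0 ∩ Set.Iio t) ∂μ ≤ ENNReal.ofReal b := by
      have h3 : ∫⁻ t, volume (Set.Ici 0 ∩ Set.Iio t) ∂μ
          ≤ ∫⁻ _, ENNReal.ofReal b ∂μ := by
        refine lintegral_mono_ae ?_
        filter_upwards [hae] with t ht
        rw [Set.Ici_inter_Iio, Real.volume_Ico, sub_zero]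
        exact ENNReal.ofReal_le_ofReal ht.2
      simpa [lintegral_const, measure_univ] using h3
    calc (∫⁻ t, volume (Set.Ici 0 ∩ Set.Iio t) ∂μ) * (ENNReal.ofReal E)⁻¹
        ≤ ENNReal.ofReal b * (ENNReal.ofReal E)⁻¹ := mul_le_mul_left h2 _
      _ < ⊤ := ENNReal.mul_lt_top ENNReal.ofReal_lt_top hcT.lt_top
  haveI := hfinπ
  refine (Measure.ext_of_Iic π _ fun a => ?_).symm
  rw [Measure.map_apply hmf measurableSet_Iic, hπs _ measurableSet_Iic]
  rcases lt_or_ge a 0 with hlt | ha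
  · have h1 : (fun p : ℝ × ℝ => |p.1 - p.2|) ⁻¹' Set.Iic a = ∅ := by
      ext p
      simp only [Set.mem_preimage, Set.mem_Iic, Set.mem_empty_iff_false, iff_false, not_le]
      exact lt_of_lt_of_le hlt (abs_nonneg _)
    have h2 : Set.Iic a ∩ Set.Ici 0 = ∅ := by
      ext x
      simp only [Set.mem_inter_iff, Set.mem_Iic, Set.mem_Ici, Set.mem_empty_iff_false, iff_false,
        not_and, not_le]
      intro h3
      linarith
    simp [h1, h2]
  · rw [Measure.prod_apply (hmf measurableSet_Iic)]
    have hpre : ∀ θ : ℝ, (Prod.mk θ ⁻¹' ((fun p : ℝ × ℝ => |p.1 - p.2|) ⁻¹' Set.Iic a))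
        = Set.Icc (θ - a) (θ + a) := by
      intro θ
      ext y
      simp only [Set.mem_preimage, Set.mem_Iic, Set.mem_Icc, abs_le]
      constructor <;> rintro ⟨h1, h2⟩ <;> constructor <;> linarith
    simp_rw [hpre, hπs _ measurableSet_Icc]
    rw [lintegral_mul_const' _ _ hcT]
    congr 1
    have hI : ∀ θ : ℝ, ∫⁻ y in Set.Icc (θ - a) (θ + a) ∩ Set.Ici 0, μ (Set.Ioi y) ∂volume
        = ∫⁻ t, ENNReal.ofReal (min (θ + a) t - max (θ - a) 0) ∂μ := by
      intro θ
      have hs : Set.Icc (θ - a) (θ + a) ∩ Set.Ici 0 = Set.Icc (max (θ - a) 0) (θ + a) := by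
        ext y
        simp only [Set.mem_inter_iff, Set.mem_Icc, Set.mem_Ici, max_le_iff]
        tauto
      rw [hs, aux_swap μ measurableSet_Icc]
      exact lintegral_congr fun t => aux_vol _ _ _
    have hR : ∫⁻ y in Set.Iic a ∩ Set.Ici 0, μ (Set.Ioi y) ∂volume
        = ∫⁻ t, ENNReal.ofReal (min a t) ∂μ := by
      rw [Set.inter_comm, Set.Ici_inter_Iic, aux_swap μ measurableSet_Icc]
      refine lintegral_congr fun t => ?_
      rw [aux_vol, sub_zero]
    rw [hR]
    simp_rw [hI]
    exact (aux_core μ b a ha hae).symm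
end

section
/- Let 0 < α < 1 be irrational and let μ be uniform on {α, 1}. Then the stationary distribution π_μ of the process x_{k+1} = |θ_{k+1} − x_k| has cumulative distribution function π_μ(x) = 2x/(1+α) for 0 ≤ x ≤ α, and π_μ(x) = (x+α)/(1+α) for α ≤ x ≤ 1. -/
/-!
The density `y ↦ μ(θ > y) / E θ` of `π` is a step function: `2 / (1 + α)` on `[0, α)` and
`1 / (1 + α)` on `[α, 1)`. Integrating it over `[0, x]`, split at `α`, gives the two formulas.
-/

open MeasureTheory ENNReal Set

lemma withDensity_restrict_Ici_apply_Iic (ν : Measure ℝ) (f : ℝ → ℝ≥0∞) (a x : ℝ) :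
    (ν.restrict (Ici a)).withDensity f (Iic x) = ∫⁻ y in Icc a x, f y ∂ν := by
  rw [withDensity_apply _ measurableSet_Iic, Measure.restrict_restrict measurableSet_Iic,
    Iic_inter_Ici]

lemma setLIntegral_Icc_eq_of_eqOn_Ico {f : ℝ → ℝ≥0∞} {a b c : ℝ} (hc : 0 ≤ c)
    (hf : EqOn f (fun _ => ENNReal.ofReal c) (Ico a b)) :
    ∫⁻ y in Icc a b, f y = ENNReal.ofReal (c * (b - a)) := by
  rw [← Measure.restrict_congr_set Ico_ae_eq_Icc, setLIntegral_congr_fun measurableSet_Ico hf,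
    setLIntegral_const, Real.volume_Ico, ENNReal.ofReal_mul hc]

lemma setLIntegral_Icc_add_Icc {μ : Measure ℝ} [NullSingletonClass μ] {f : ℝ → ℝ≥0∞}
    {a b c : ℝ} (hab : a ≤ b) (hbc : b ≤ c) :
    ∫⁻ y in Icc a b, f y ∂μ + ∫⁻ y in Icc b c, f y ∂μ = ∫⁻ y in Icc a c, f y ∂μ := by
  have hdisj : Disjoint (Ico a b) (Icc b c) :=
    disjoint_left.2 fun _ hy hy' => (not_le.2 hy.2) hy'.1
  rw [← Ico_union_Icc_eq_Icc hab hbc, lintegral_union measurableSet_Icc hdisj,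
    Measure.restrict_congr_set Ico_ae_eq_Icc]

lemma uniformPair_Ioi_of_lt_left {a b y : ℝ} (hab : a < b) (hy : y < a) :
    ((2 : ℝ≥0∞)⁻¹ • (Measure.dirac a + Measure.dirac b)) (Ioi y) = 1 := by
  simp [hy, hy.trans hab, ENNReal.inv_two_add_inv_two]

lemma uniformPair_Ioi_of_le_of_lt {a b y : ℝ} (hay : a ≤ y) (hyb : y < b) :
    ((2 : ℝ≥0∞)⁻¹ • (Measure.dirac a + Measure.dirac b)) (Ioi y) = 2⁻¹ := by
  simp [not_lt.2 hay, hyb]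

theorem stmt_9_general (α : ℝ) (h0 : 0 < α) (h1 : α < 1)
    (μ : Measure ℝ) (hμ : μ = (2 : ℝ≥0∞)⁻¹ • (Measure.dirac α + Measure.dirac 1))
    (π : Measure ℝ)
    (hπ : π = (volume.restrict (Set.Ici 0)).withDensity
      (fun y => μ (Set.Ioi y) / ENNReal.ofReal ((1 + α) / 2))) :
    (∀ x : ℝ, 0 ≤ x → x ≤ α → π (Set.Iic x) = ENNReal.ofReal (2 * x / (1 + α))) ∧
    (∀ x : ℝ, α ≤ x → x ≤ 1 → π (Set.Iic x) = ENNReal.ofReal ((x + α) / (1 + α))) := by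
  subst hπ
  have hmean : 0 < (1 + α) / 2 := by linarith
  have density_low : EqOn (fun y => μ (Ioi y) / ENNReal.ofReal ((1 + α) / 2))
      (fun _ => ENNReal.ofReal (2 / (1 + α))) (Ico 0 α) := by
    intro y hy
    dsimp only
    rw [hμ, uniformPair_Ioi_of_lt_left h1 hy.2, ← ENNReal.ofReal_one,
      ← ENNReal.ofReal_div_of_pos hmean]
    congr 1
    field_simp
  have density_mid : EqOn (fun y => μ (Ioi y) / ENNReal.ofReal ((1 + α) / 2))
      (fun _ => ENNReal.ofReal (1 / (1 + α))) (Ico α 1) := by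
    intro y hy
    dsimp only
    rw [hμ, uniformPair_Ioi_of_le_of_lt hy.1 hy.2, ← ENNReal.ofReal_ofNat 2,
      ← ENNReal.ofReal_inv_of_pos two_pos, ← ENNReal.ofReal_div_of_pos hmean]
    congr 1
    field_simp
  refine ⟨fun x hx0 hxα => ?_, fun x hαx hx1 => ?_⟩
  · rw [withDensity_restrict_Ici_apply_Iic, setLIntegral_Icc_eq_of_eqOn_Ico (by positivity)
      (density_low.mono (Ico_subset_Ico_right hxα))]
    congr 1
    ring
  · rw [withDensity_restrict_Ici_apply_Iic, ← setLIntegral_Icc_add_Icc h0.le hαx,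
      setLIntegral_Icc_eq_of_eqOn_Ico (by positivity) density_low,
      setLIntegral_Icc_eq_of_eqOn_Ico (by positivity)
        (density_mid.mono (Ico_subset_Ico_right hx1)),
      ← ENNReal.ofReal_add (by positivity)
        (mul_nonneg (by positivity) (sub_nonneg.2 hαx))]
    congr 1
    field_simp
    ring

/-- For `μ` uniform on `{α, 1}` with `0 < α < 1` irrational, the stationary
distribution `π_μ` (given by the general formula
`π_μ(x) = (1/E(θ)) ∫₀ˣ Pr{θ > y} dy`, with `E(θ) = (1+α)/2`) has CDF
`π_μ(x) = 2x/(1+α)` for `0 ≤ x ≤ α` and `π_μ(x) = (x+α)/(1+α)` for `α ≤ x ≤ 1`. -/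
theorem stmt_9 (α : ℝ) (h0 : 0 < α) (h1 : α < 1) (hirr : Irrational α)
    (μ : Measure ℝ) (hμ : μ = (2 : ℝ≥0∞)⁻¹ • (Measure.dirac α + Measure.dirac 1))
    (π : Measure ℝ)
    (hπ : π = (volume.restrict (Set.Ici 0)).withDensity
      (fun y => μ (Set.Ioi y) / ENNReal.ofReal ((1 + α) / 2))) :
    (∀ x : ℝ, 0 ≤ x → x ≤ α → π (Set.Iic x) = ENNReal.ofReal (2 * x / (1 + α))) ∧
    (∀ x : ℝ, α ≤ x → x ≤ 1 → π (Set.Iic x) = ENNReal.ofReal ((x + α) / (1 + α))) :=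
  stmt_9_general α h0 h1 μ hμ π hπ
end

section
/- Let 0 < α < 1 be irrational and let μ be uniform on {α, 1}. If π is any stationary probability distribution for the process x_{k+1} = |θ_{k+1} − x_k|, then π has no atoms; in particular π({0}) = 0 and π({nα mod 1}) = 0 for all integers n. -/
/-!
Write `f x = π {x}`. Stationarity gives `2 f x = f (α - x) + f (α + x) + f (1 - x) + f (1 + x)`
for `x > 0`, `f` vanishes outside `[0, 1]`, and `f` exceeds any `c > 0` only finitely often, so
maxima of `f` on subsets are attained. Let `s` be the maximum of `f` on `(0, α)`. Atoms in `(α, 1]`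
weigh at most `s / 2`: at a heaviest atom there, the balance equation forces equally heavy atoms
`α` further to the right until one lands in `(1 - α, 1)`, whose mirror image in `(0, α)` then
weighs twice as much. With this bound, the balance equations at the maximizers of `f` on `(0, α)`
are tight, and send each maximizer `x` to another one `x'` with `± (x' - x) = a - b α`, `a ≥ 1`,
`b ≥ 0`, the sign depending only on whether `α < 1/2`. As `α` is irrational, no nonempty sum of such
differences vanishes, so no such cycle exists on the finite set of maximizers. Hence `f = 0` on
`(0, α)`, then on `(α, 1]`, and finally at `0` and `α`.
-/

open MeasureTheory Set
open scoped ENNReal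

theorem Set.Finite.exists_forall_sub_notMem {G : Type*} [AddGroup G] {S : AddSubsemigroup G}
    (h0 : (0 : G) ∉ S) {P : Set G} (hP : P.Finite) (hne : P.Nonempty) :
    ∃ x ∈ P, ∀ y ∈ P, y - x ∉ S := by
  let r : G → G → Prop := fun y x => y - x ∈ S
  have : IsStrictOrder G r :=
    { irrefl := fun x hx => h0 (by simpa [r] using hx)
      trans := fun x y z hxy hyz => by simpa [r] using S.add_mem hxy hyz }
  obtain ⟨⟨x, hx⟩, -, hmin⟩ :=
    (hP.wellFoundedOn (r := r)).has_min univ ⟨⟨_, hne.some_mem⟩, trivial⟩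
  exact ⟨x, hx, fun y hy => hmin ⟨y, hy⟩ trivial⟩

theorem Set.Finite.exists_forall_sub_notMem' {G : Type*} [AddCommGroup G]
    {S : AddSubsemigroup G} (h0 : (0 : G) ∉ S) {P : Set G} (hP : P.Finite) (hne : P.Nonempty) :
    ∃ x ∈ P, ∀ y ∈ P, x - y ∉ S := by
  obtain ⟨x, hx, h⟩ := hP.neg.exists_forall_sub_notMem h0 hne.neg
  refine ⟨-x, hx, fun y hy => ?_⟩
  rw [show -x - y = -y - x by abel]
  exact h (-y) (by simpa using hy)

theorem exists_isMaxOn_of_finite_setOf_le {ι : Type*} {f : ι → ℝ}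
    (hf : ∀ c > 0, {x | c ≤ f x}.Finite) {A : Set ι} {x : ι} (hx : x ∈ A) (hpos : 0 < f x) :
    ∃ x₀ ∈ A, IsMaxOn f A x₀ := by
  obtain ⟨x₀, ⟨hx₀A, hx₀⟩, hmax⟩ := (A ∩ {y | f x ≤ f y}).exists_max_image f
    ((hf _ hpos).subset inter_subset_right) ⟨x, hx, le_refl (f x)⟩
  refine ⟨x₀, hx₀A, isMaxOn_iff.2 fun y hy => ?_⟩
  rcases le_total (f x) (f y) with h | h
  · exact hmax y ⟨hy, h⟩
  · exact h.trans hx₀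

def natSubNatMul (α : ℝ) : AddSubsemigroup ℝ where
  carrier := {z | ∃ a b : ℕ, 0 < a ∧ z = a - b * α}
  add_mem' := by
    rintro _ _ ⟨a, b, ha, rfl⟩ ⟨a', b', -, rfl⟩
    exact ⟨a + a', b + b', by omega, by push_cast; ring⟩

theorem Irrational.zero_notMem_natSubNatMul {α : ℝ} (h : Irrational α) :
    (0 : ℝ) ∉ natSubNatMul α := by
  rintro ⟨a, b, ha, hab⟩
  rcases Nat.eq_zero_or_pos b with rfl | hb
  · simp only [CharP.cast_eq_zero, zero_mul, sub_zero] at hab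
    exact ha.ne' (by exact_mod_cast hab.symm)
  · exact (h.natCast_mul hb.ne').ne_nat a (by linarith)

/-- `f x` plays the role of the mass `π {x}` of a stationary law `π` of `x ↦ |θ - x|`,
`θ` uniform on `{α, 1}`. -/
structure IsStationaryAtoms (α : ℝ) (f : ℝ → ℝ) : Prop where
  nonneg : ∀ x, 0 ≤ f x
  finite_setOf_le : ∀ c > 0, {x | c ≤ f x}.Finite
  eq_zero_of_neg : ∀ x < 0, f x = 0
  eq_zero_of_one_lt : ∀ x, 1 < x → f x = 0
  balance : ∀ x > 0, 2 * f x = f (α - x) + f (α + x) + f (1 - x) + f (1 + x)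
  balance_zero : 2 * f 0 = f α + f 1

namespace IsStationaryAtoms

variable {α s x y : ℝ} {f : ℝ → ℝ}

theorem two_mul_apply_one (hf : IsStationaryAtoms α f) (h0 : 0 < α) (h1 : α < 1) :
    2 * f 1 = f 0 := by
  have h := hf.balance 1 one_pos
  rw [sub_self] at h
  linarith [hf.eq_zero_of_neg (α - 1) (by linarith), hf.eq_zero_of_one_lt (α + 1) (by linarith),
    hf.eq_zero_of_one_lt (1 + 1) (by norm_num)]

theorem three_mul_apply_zero (hf : IsStationaryAtoms α f) (h0 : 0 < α) (h1 : α < 1) :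
    3 * f 0 = 2 * f α := by
  linarith [hf.balance_zero, hf.two_mul_apply_one h0 h1]

theorem four_mul_apply_one (hf : IsStationaryAtoms α f) (h0 : 0 < α) (h1 : α < 1) :
    4 * f 1 = f (α + α) + f (1 - α) := by
  have h := hf.balance α h0
  rw [sub_self] at h
  linarith [hf.eq_zero_of_one_lt (1 + α) (by linarith), hf.two_mul_apply_one h0 h1,
    hf.three_mul_apply_zero h0 h1]

theorem balance_Ioc (hf : IsStationaryAtoms α f) (h0 : 0 < α) (hy : y ∈ Ioc α 1) :
    2 * f y = f (α + y) + f (1 - y) := by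
  linarith [hf.balance y (h0.trans hy.1), hf.eq_zero_of_neg (α - y) (by linarith [hy.1]),
    hf.eq_zero_of_one_lt (1 + y) (by linarith [hy.1])]

theorem two_mul_apply_eq_apply_one_sub (hf : IsStationaryAtoms α f) (h0 : 0 < α)
    (hy : y ∈ Ioc α 1) (hy' : 1 - α < y) : 2 * f y = f (1 - y) := by
  linarith [hf.balance_Ioc h0 hy, hf.eq_zero_of_one_lt (α + y) (by linarith)]

theorem balance_of_lt_one_sub (hf : IsStationaryAtoms α f) (h0 : 0 < α) (hx : x ∈ Ioo 0 α)
    (hx' : x < 1 - α) : 3 * f x = 2 * f (α - x) + 2 * f (α + x) := by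
  have h := hf.two_mul_apply_eq_apply_one_sub h0 (y := 1 - x) ⟨by linarith, by linarith [hx.1]⟩
    (by linarith [hx.2])
  simp only [sub_sub_cancel] at h
  linarith [hf.balance x hx.1, hf.eq_zero_of_one_lt (1 + x) (by linarith [hx.1])]

theorem apply_sub_and_add_of_eq (hf : IsStationaryAtoms α f) (h0 : 0 < α)
    (hs : ∀ x ∈ Ioo 0 α, f x ≤ s) (hs' : ∀ y ∈ Ioc α 1, 2 * f y ≤ s)
    (hx : x ∈ Ioo 0 α) (hx' : x < 1 - α) (hfx : f x = s) :
    f (α - x) = s ∧ 2 * f (α + x) = s := by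
  have := hf.balance_of_lt_one_sub h0 hx hx'
  have := hs (α - x) ⟨by linarith [hx.2], by linarith [hx.1]⟩
  have := hs' (α + x) ⟨by linarith [hx.1], by linarith⟩
  constructor <;> linarith

theorem four_mul_apply_one_le (hf : IsStationaryAtoms α f) (h0 : 0 < α) (h1 : α < 1)
    (hα : α ≠ 1 / 2) (hs : ∀ x ∈ Ioo 0 α, f x ≤ s) (hs' : ∀ y ∈ Ioc α 1, 2 * f y ≤ s) :
    4 * f 1 ≤ s := by
  rw [hf.four_mul_apply_one h0 h1]
  rcases hα.lt_or_gt with hα | hα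
  · linarith [hs' (α + α) ⟨by linarith, by linarith⟩, hs' (1 - α) ⟨by linarith, by linarith⟩]
  · linarith [hf.eq_zero_of_one_lt (α + α) (by linarith), hs (1 - α) ⟨by linarith, by linarith⟩]

theorem exists_climb (hf : IsStationaryAtoms α f) (h0 : 0 < α)
    (hs' : ∀ y ∈ Ioc α 1, 2 * f y ≤ s) (hy : y ∈ Ioc α 1) (hfy : 2 * f y = s) :
    ∃ K : ℕ, y + K * α ∈ Icc (1 - α) 1 ∧ 2 * f (y + K * α) = s := by
  have climb : ∀ y ∈ Ioo α (1 - α), 2 * f y = s → 2 * f (α + y) = s := fun y hy hfy => by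
    linarith [hf.balance_Ioc h0 ⟨hy.1, by linarith [hy.2]⟩,
      hs' (α + y) ⟨by linarith [hy.1], by linarith [hy.2]⟩,
      hs' (1 - y) ⟨by linarith [hy.2], by linarith [hy.1]⟩]
  suffices ∀ n : ℕ, ∀ y ∈ Ioc α 1, 2 * f y = s → 1 - α ≤ y + n * α →
      ∃ K : ℕ, y + K * α ∈ Icc (1 - α) 1 ∧ 2 * f (y + K * α) = s by
    obtain ⟨n, hn⟩ := exists_nat_ge ((1 - α - y) / α)
    exact this n y hy hfy (by linarith [(div_le_iff₀ h0).1 hn])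
  intro n
  induction n with
  | zero =>
    intro y hy hfy hle
    refine ⟨0, ?_, ?_⟩ <;> simp only [Nat.cast_zero, zero_mul, add_zero] at hle ⊢
    exacts [⟨hle, hy.2⟩, hfy]
  | succ n ih =>
    intro y hy hfy hle
    by_cases hy₁ : 1 - α ≤ y
    · refine ⟨0, ?_, ?_⟩ <;> simp only [Nat.cast_zero, zero_mul, add_zero]
      exacts [⟨hy₁, hy.2⟩, hfy]
    obtain ⟨K, hK, hfK⟩ := ih (α + y) ⟨by linarith [hy.1], by linarith⟩
      (climb y ⟨hy.1, by linarith⟩ hfy) (by push_cast at hle; linarith)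
    have e : y + ((K + 1 : ℕ) : ℝ) * α = α + y + K * α := by push_cast; ring
    exact ⟨K + 1, e ▸ hK, e ▸ hfK⟩

theorem exists_landing (hf : IsStationaryAtoms α f) (h0 : 0 < α) (h1 : α < 1)
    (hirr : Irrational α) (hs : ∀ x ∈ Ioo 0 α, f x ≤ s) (hs' : ∀ y ∈ Ioc α 1, 2 * f y ≤ s)
    (hs0 : 0 < s) (hy : y ∈ Ioc α 1) (hfy : 2 * f y = s) :
    ∃ y', α < y' ∧ 1 - α < y' ∧ y' < 1 ∧ 2 * f y' = s ∧ ∃ a b : ℕ, y' = y + b * α - a := by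
  have hα : α ≠ 1 / 2 := fun h => hirr ⟨1 / 2, by rw [h]; norm_num⟩
  have hne : ∀ z, 2 * f z = s → z ≠ 1 := by
    rintro z hz rfl
    linarith [hf.four_mul_apply_one_le h0 h1 hα hs hs']
  obtain ⟨K, ⟨hK₁, hK₂⟩, hfK⟩ := hf.exists_climb h0 hs' hy hfy
  have hKα : 0 ≤ K * α := by positivity
  rcases hK₁.lt_or_eq with hlt | heq
  · exact ⟨_, by linarith [hy.1], hlt, hK₂.lt_of_ne (hne _ hfK), hfK, 0, K, by simp⟩
  -- landing exactly on `1 - α` forces an atom at `2α` of the same weight; climb again from there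
  rw [← heq] at hfK
  have h2α : 2 * f (α + α) = s := by
    have h := hf.balance_Ioc h0 (y := 1 - α) ⟨by linarith [hy.1], by linarith⟩
    rw [show α + (1 - α) = 1 by ring, show 1 - (1 - α) = α by ring] at h
    linarith [hf.four_mul_apply_one h0 h1, hf.two_mul_apply_one h0 h1,
      hf.three_mul_apply_zero h0 h1]
  obtain ⟨K', ⟨hK'₁, hK'₂⟩, hfK'⟩ :=
    hf.exists_climb h0 hs' ⟨by linarith, by linarith [hy.1]⟩ h2α
  have hK'lt : 1 - α < α + α + K' * α := hK'₁.lt_of_ne fun h =>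
    (hirr.natCast_mul (m := K' + 3) (by omega)).ne_one (by push_cast; linarith)
  have hK'α : 0 ≤ K' * α := by positivity
  exact ⟨_, by linarith, hK'lt, hK'₂.lt_of_ne (hne _ hfK'), hfK', 1, K + K' + 3,
    by push_cast; linarith⟩

theorem two_mul_le_of_forall_Ioo_le (hf : IsStationaryAtoms α f) (h0 : 0 < α) (h1 : α < 1)
    (hirr : Irrational α) (hs : ∀ x ∈ Ioo 0 α, f x ≤ s) : ∀ y ∈ Ioc α 1, 2 * f y ≤ s := by
  by_contra! ⟨y, hy, hlt⟩
  have hs0 : 0 ≤ s := (hf.nonneg _).trans (hs (α / 2) ⟨by linarith, by linarith⟩)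
  obtain ⟨y₁, hy₁, hmax⟩ :=
    exists_isMaxOn_of_finite_setOf_le hf.finite_setOf_le hy (by linarith)
  have hmax := isMaxOn_iff.1 hmax
  obtain ⟨y', hy'α, hy'1α, hy'1, hfy', -⟩ := hf.exists_landing h0 h1 hirr (s := 2 * f y₁)
    (fun x hx => by linarith [hs x hx, hmax y hy]) (fun z hz => by linarith [hmax z hz])
    (by linarith [hmax y hy]) hy₁ rfl
  linarith [hf.two_mul_apply_eq_apply_one_sub h0 ⟨hy'α, hy'1.le⟩ hy'1α, hmax y hy,
    hs (1 - y') ⟨by linarith, by linarith⟩]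

theorem exists_sub_mem_of_lt_half (hf : IsStationaryAtoms α f) (h0 : 0 < α) (h1 : α < 1)
    (hirr : Irrational α) (hα : α < 1 / 2) (hs : ∀ x ∈ Ioo 0 α, f x ≤ s)
    (hs' : ∀ y ∈ Ioc α 1, 2 * f y ≤ s) (hs0 : 0 < s) (hx : x ∈ Ioo 0 α) (hfx : f x = s) :
    ∃ x' ∈ Ioo 0 α, f x' = s ∧ x' - x ∈ natSubNatMul α := by
  obtain ⟨hσ, -⟩ := hf.apply_sub_and_add_of_eq h0 hs hs' hx (by linarith [hx.2]) hfx
  obtain ⟨-, hy⟩ := hf.apply_sub_and_add_of_eq h0 hs hs' (x := α - x)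
    ⟨by linarith [hx.2], by linarith [hx.1]⟩ (by linarith [hx.1]) hσ
  obtain ⟨y', hy'α, hy'1α, hy'1, hfy', a, b, rfl⟩ := hf.exists_landing h0 h1 hirr hs hs' hs0
    ⟨by linarith [hx.2], by linarith [hx.1]⟩ hy
  refine ⟨1 - (α + (α - x) + b * α - a), ⟨by linarith, by linarith⟩, ?_, a + 1, b + 2, by omega,
    by push_cast; ring⟩
  linarith [hf.two_mul_apply_eq_apply_one_sub h0 ⟨hy'α, hy'1.le⟩ hy'1α]

theorem apply_sub_and_one_sub_of_eq (hf : IsStationaryAtoms α f) (h1 : α < 1)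
    (hs : ∀ x ∈ Ioo 0 α, f x ≤ s) (hx : x ∈ Ioo 0 α) (hx' : 1 - α < x) (hfx : f x = s) :
    f (α - x) = s ∧ f (1 - x) = s := by
  have := hs (α - x) ⟨by linarith [hx.2], by linarith [hx.1]⟩
  have := hs (1 - x) ⟨by linarith [hx.2], by linarith⟩
  have := hf.balance x hx.1
  have := hf.eq_zero_of_one_lt (α + x) (by linarith)
  have := hf.eq_zero_of_one_lt (1 + x) (by linarith [hx.1])
  constructor <;> linarith

theorem apply_sub_eq_of_half_lt (hf : IsStationaryAtoms α f) (h0 : 0 < α) (h1 : α < 1)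
    (hα : 1 / 2 < α) (hs : ∀ x ∈ Ioo 0 α, f x ≤ s) (hs' : ∀ y ∈ Ioc α 1, 2 * f y ≤ s)
    (hx : x ∈ Ioo 0 α) (hfx : f x = s) : f (α - x) = s := by
  rcases lt_trichotomy x (1 - α) with hlt | rfl | hgt
  · exact (hf.apply_sub_and_add_of_eq h0 hs hs' hx hlt hfx).1
  · have h := hf.balance (1 - α) (by linarith)
    rw [show α + (1 - α) = 1 by ring, show 1 - (1 - α) = α by ring] at h
    linarith [hf.eq_zero_of_one_lt (1 + (1 - α)) (by linarith), hf.four_mul_apply_one h0 h1,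
      hf.eq_zero_of_one_lt (α + α) (by linarith), hf.two_mul_apply_one h0 h1,
      hf.three_mul_apply_zero h0 h1]
  · exact (hf.apply_sub_and_one_sub_of_eq h1 hs hx hgt hfx).1

theorem exists_sub_mem_of_half_lt (hf : IsStationaryAtoms α f) (h0 : 0 < α) (h1 : α < 1)
    (hα : 1 / 2 < α) (hs : ∀ x ∈ Ioo 0 α, f x ≤ s) (hs' : ∀ y ∈ Ioc α 1, 2 * f y ≤ s)
    (hx : x ∈ Ioo 0 α) (hfx : f x = s) :
    ∃ x' ∈ Ioo 0 α, f x' = s ∧ x - x' ∈ natSubNatMul α := by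
  have hσ := fun w (hw : w ∈ Ioo 0 α) hfw => hf.apply_sub_eq_of_half_lt h0 h1 hα hs hs' hw hfw
  rcases lt_trichotomy x (1 - α) with hlt | rfl | hgt
  · have hy := (hf.apply_sub_and_add_of_eq h0 hs hs' hx hlt hfx).2
    have := hf.two_mul_apply_eq_apply_one_sub h0 (y := α + x) ⟨by linarith [hx.1], by linarith⟩
      (by linarith [hx.1])
    refine ⟨α - (1 - (α + x)), ⟨by linarith [hx.1], by linarith [hx.1]⟩,
      hσ _ ⟨by linarith, by linarith [hx.1]⟩ (by linarith), 1, 2, one_pos, by push_cast; ring⟩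
  · exact ⟨α - (1 - α), ⟨by linarith, by linarith⟩, hσ _ hx hfx, 2, 3, two_pos,
      by push_cast; ring⟩
  · exact ⟨α - (1 - x), ⟨by linarith [hx.2], by linarith [hx.2]⟩,
      hσ _ ⟨by linarith [hx.2], by linarith⟩ (hf.apply_sub_and_one_sub_of_eq h1 hs hx hgt hfx).2,
      1, 1, one_pos, by push_cast; ring⟩

theorem apply_eq_zero_of_mem_Ioo (hf : IsStationaryAtoms α f) (h0 : 0 < α) (h1 : α < 1)
    (hirr : Irrational α) (hx : x ∈ Ioo 0 α) : f x = 0 := by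
  by_contra hfx
  obtain ⟨x₀, hx₀, hmax⟩ := exists_isMaxOn_of_finite_setOf_le hf.finite_setOf_le hx
    ((hf.nonneg x).lt_of_ne' hfx)
  have hs := isMaxOn_iff.1 hmax
  have hs' := hf.two_mul_le_of_forall_Ioo_le h0 h1 hirr hs
  have hs0 : 0 < f x₀ := ((hf.nonneg x).lt_of_ne' hfx).trans_le (hs x hx)
  have hP : {x | x ∈ Ioo 0 α ∧ f x = f x₀}.Finite :=
    (hf.finite_setOf_le _ hs0).subset fun x hx => hx.2.ge
  have hα : α ≠ 1 / 2 := fun h => hirr ⟨1 / 2, by rw [h]; norm_num⟩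
  rcases hα.lt_or_gt with hα | hα
  · obtain ⟨x, ⟨hx, hfx⟩, hmin⟩ :=
      hP.exists_forall_sub_notMem hirr.zero_notMem_natSubNatMul ⟨x₀, hx₀, rfl⟩
    obtain ⟨x', hx', hfx', hmem⟩ := hf.exists_sub_mem_of_lt_half h0 h1 hirr hα hs hs' hs0 hx hfx
    exact hmin x' ⟨hx', hfx'⟩ hmem
  · obtain ⟨x, ⟨hx, hfx⟩, hmin⟩ :=
      hP.exists_forall_sub_notMem' hirr.zero_notMem_natSubNatMul ⟨x₀, hx₀, rfl⟩
    obtain ⟨x', hx', hfx', hmem⟩ := hf.exists_sub_mem_of_half_lt h0 h1 hα hs hs' hx hfx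
    exact hmin x' ⟨hx', hfx'⟩ hmem

theorem eq_zero (hf : IsStationaryAtoms α f) (h0 : 0 < α) (h1 : α < 1) (hirr : Irrational α)
    (x : ℝ) : f x = 0 := by
  have hIoc : ∀ y ∈ Ioc α 1, f y = 0 := fun y hy => by
    linarith [hf.nonneg y, hf.two_mul_le_of_forall_Ioo_le h0 h1 hirr (s := 0)
      (fun x hx => (hf.apply_eq_zero_of_mem_Ioo h0 h1 hirr hx).le) y hy]
  have hf1 := hIoc 1 ⟨h1, le_rfl⟩
  have hf0 : f 0 = 0 := by linarith [hf.two_mul_apply_one h0 h1]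
  rcases lt_or_ge x 0 with hx | hx
  · exact hf.eq_zero_of_neg x hx
  rcases hx.eq_or_lt with rfl | hx
  · exact hf0
  rcases lt_trichotomy x α with hxα | rfl | hxα
  · exact hf.apply_eq_zero_of_mem_Ioo h0 h1 hirr ⟨hx, hxα⟩
  · linarith [hf.three_mul_apply_zero h0 h1]
  rcases le_or_gt x 1 with hx1 | hx1
  · exact hIoc x ⟨hxα, hx1⟩
  · exact hf.eq_zero_of_one_lt x hx1

end IsStationaryAtoms

theorem measure_setOf_abs_sub_mem_singleton (π : Measure ℝ) (c : ℝ) {x : ℝ} (hx : 0 < x) :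
    π {y | |c - y| ∈ ({x} : Set ℝ)} = π {c - x} + π {c + x} := by
  have : {y | |c - y| ∈ ({x} : Set ℝ)} = {c - x} ∪ {c + x} := by
    ext y
    simp only [mem_singleton_iff, mem_union, abs_eq hx.le]
    constructor <;> rintro (h | h) <;> [left; right; left; right] <;> linarith
  rw [this, measure_union (disjoint_singleton.2 (by linarith)) (measurableSet_singleton _)]

def IsAbsDiffStationary (μ π : Measure ℝ) : Prop :=
  Measure.map (fun p : ℝ × ℝ => |p.1 - p.2|) (μ.prod π) = π

namespace IsAbsDiffStationary

variable {μ π : Measure ℝ} {a b x : ℝ} {S : Set ℝ}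

theorem measure_eq_lintegral [SFinite π] (h : IsAbsDiffStationary μ π) (hS : MeasurableSet S) :
    π S = ∫⁻ θ, π {y | |θ - y| ∈ S} ∂μ := by
  have hm : Measurable fun p : ℝ × ℝ => |p.1 - p.2| := (measurable_fst.sub measurable_snd).abs
  conv_lhs => rw [← h]
  rw [Measure.map_apply hm hS, Measure.prod_apply (hm hS)]
  rfl

theorem measure_Iio_zero [SFinite π] (h : IsAbsDiffStationary μ π) : π (Iio 0) = 0 := by
  have hpre : ∀ θ : ℝ, {y | |θ - y| ∈ Iio 0} = ∅ := fun θ =>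
    eq_empty_of_forall_notMem fun y hy => (abs_nonneg (θ - y)).not_gt hy
  rw [h.measure_eq_lintegral measurableSet_Iio]
  simp only [hpre, measure_empty, lintegral_zero]

theorem measure_eq_of_two_point [SFinite π]
    (h : IsAbsDiffStationary ((2 : ℝ≥0∞)⁻¹ • (Measure.dirac a + Measure.dirac b)) π)
    (hS : MeasurableSet S) :
    π S = 2⁻¹ * π {y | |a - y| ∈ S} + 2⁻¹ * π {y | |b - y| ∈ S} := by
  rw [h.measure_eq_lintegral hS, lintegral_smul_measure, lintegral_add_measure, lintegral_dirac,
    lintegral_dirac, smul_eq_mul, mul_add]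

theorem two_mul_measure_singleton [SFinite π]
    (h : IsAbsDiffStationary ((2 : ℝ≥0∞)⁻¹ • (Measure.dirac a + Measure.dirac b)) π)
    (hx : 0 < x) : 2 * π {x} = π {a - x} + π {a + x} + (π {b - x} + π {b + x}) := by
  rw [h.measure_eq_of_two_point (measurableSet_singleton x),
    measure_setOf_abs_sub_mem_singleton π a hx, measure_setOf_abs_sub_mem_singleton π b hx,
    mul_add, ← mul_assoc, ← mul_assoc, ENNReal.mul_inv_cancel two_ne_zero ENNReal.ofNat_ne_top,
    one_mul, one_mul]

theorem two_mul_measure_singleton_zero [SFinite π]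
    (h : IsAbsDiffStationary ((2 : ℝ≥0∞)⁻¹ • (Measure.dirac a + Measure.dirac b)) π) :
    2 * π {0} = π {a} + π {b} := by
  have hpre : ∀ c : ℝ, {y | |c - y| ∈ ({0} : Set ℝ)} = {c} := fun c => by
    ext y
    simp [sub_eq_zero, eq_comm]
  rw [h.measure_eq_of_two_point (measurableSet_singleton 0), hpre, hpre, ← mul_add, ← mul_assoc,
    ENNReal.mul_inv_cancel two_ne_zero ENNReal.ofNat_ne_top, one_mul]

theorem measure_Ioi_eq_zero [IsFiniteMeasure π]
    (h : IsAbsDiffStationary ((2 : ℝ≥0∞)⁻¹ • (Measure.dirac a + Measure.dirac b)) π)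
    (ha : 0 < a) (hab : a ≤ b) : π (Ioi b) = 0 := by
  have hshift : ∀ t, b ≤ t → π (Ioi t) ≤ π (Ioi (t + a)) := by
    intro t ht
    have hc : ∀ c, a ≤ c → c ≤ t → π {y | |c - y| ∈ Ioi t} ≤ π (Ioi (t + a)) := by
      intro c hac hct
      calc π {y | |c - y| ∈ Ioi t} ≤ π (Iio 0 ∪ Ioi (t + a)) := by
            refine measure_mono fun y hy => ?_
            rcases lt_abs.1 (show t < |c - y| from hy) with hy | hy
            · exact .inl (show y < 0 by linarith)
            · exact .inr (show t + a < y by linarith)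
        _ ≤ π (Iio 0) + π (Ioi (t + a)) := measure_union_le _ _
        _ = π (Ioi (t + a)) := by rw [h.measure_Iio_zero, zero_add]
    calc π (Ioi t) ≤ 2⁻¹ * π (Ioi (t + a)) + 2⁻¹ * π (Ioi (t + a)) := by
          rw [h.measure_eq_of_two_point measurableSet_Ioi]
          gcongr 2⁻¹ * ?_ + 2⁻¹ * ?_
          exacts [hc a le_rfl (hab.trans ht), hc b hab ht]
      _ = π (Ioi (t + a)) := by rw [← add_mul, ENNReal.inv_two_add_inv_two, one_mul]
  have hn : ∀ n : ℕ, π (Ioi b) ≤ π (Ioi (b + n * a)) := by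
    intro n
    induction n with
    | zero => simp
    | succ n ih =>
      refine ih.trans ((hshift _ (by nlinarith [n.cast_nonneg (α := ℝ)])).trans_eq ?_)
      push_cast
      ring_nf
  have hempty : ⋂ n : ℕ, Ioi (b + n * a) = ∅ := by
    refine eq_empty_iff_forall_notMem.2 fun y hy => ?_
    obtain ⟨n, hn⟩ := exists_nat_ge ((y - b) / a)
    have := mem_iInter.1 hy n
    rw [mem_Ioi] at this
    linarith [(div_le_iff₀ ha).1 hn]
  have hanti : Antitone fun n : ℕ => Ioi (b + n * a) := fun m n hmn =>
    Ioi_subset_Ioi (by gcongr)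
  refine nonpos_iff_eq_zero.1 ?_
  calc π (Ioi b) ≤ ⨅ n : ℕ, π (Ioi (b + n * a)) := le_iInf hn
    _ = 0 := by
      rw [← hanti.measure_iInter (fun _ => measurableSet_Ioi.nullMeasurableSet)
        ⟨0, measure_ne_top _ _⟩, hempty, measure_empty]

theorem isStationaryAtoms [IsFiniteMeasure π] {α : ℝ}
    (h : IsAbsDiffStationary ((2 : ℝ≥0∞)⁻¹ • (Measure.dirac α + Measure.dirac 1)) π)
    (h0 : 0 < α) (h1 : α < 1) : IsStationaryAtoms α fun x => (π {x}).toReal where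
  nonneg _ := ENNReal.toReal_nonneg
  finite_setOf_le c hc :=
    (Measure.finite_const_le_meas_of_disjoint_iUnion π (ENNReal.ofReal_pos.2 hc)
      measurableSet_singleton (fun _ _ hxy => disjoint_singleton.2 hxy)
      (measure_ne_top π _)).subset fun _ hx => ENNReal.ofReal_le_of_le_toReal hx
  eq_zero_of_neg x hx := by
    simp [measure_mono_null (singleton_subset_iff.2 (show x ∈ Iio 0 from hx)) h.measure_Iio_zero]
  eq_zero_of_one_lt x hx := by
    simp [measure_mono_null (singleton_subset_iff.2 (show x ∈ Ioi 1 from hx))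
      (h.measure_Ioi_eq_zero h0 h1.le)]
  balance x hx := by
    have := congrArg ENNReal.toReal (h.two_mul_measure_singleton hx)
    simpa [ENNReal.toReal_add, measure_ne_top, add_assoc] using this
  balance_zero := by
    have := congrArg ENNReal.toReal h.two_mul_measure_singleton_zero
    simpa [ENNReal.toReal_add, measure_ne_top] using this

end IsAbsDiffStationary

/-- Lemma 5 (no atoms): for `0 < α < 1` irrational and `μ` uniform on `{α, 1}`, any
stationary probability distribution `π` of the process `x_{k+1} = |θ_{k+1} - x_k|`
has no atoms; in particular `π({0}) = 0` and `π({⟨nα⟩}) = 0` for every integer `n`. -/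
theorem stmt_10 (α : ℝ) (h0 : 0 < α) (h1 : α < 1) (hirr : Irrational α)
    (μ : Measure ℝ) (hμ : μ = (2 : ℝ≥0∞)⁻¹ • (Measure.dirac α + Measure.dirac 1))
    (π : Measure ℝ) [IsProbabilityMeasure π]
    (hstat : Measure.map (fun p : ℝ × ℝ => |p.1 - p.2|) (μ.prod π) = π) :
    (∀ x : ℝ, π {x} = 0) ∧ π {(0 : ℝ)} = 0 ∧
      ∀ n : ℤ, π {Int.fract ((n : ℝ) * α)} = 0 := by
  subst hμ
  have hatoms := IsAbsDiffStationary.isStationaryAtoms hstat h0 h1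
  have hzero : ∀ x : ℝ, π {x} = 0 := fun x =>
    ((ENNReal.toReal_eq_zero_iff _).1 (hatoms.eq_zero h0 h1 hirr x)).resolve_right
      (measure_ne_top π _)
  exact ⟨hzero, hzero 0, fun n => hzero _⟩
end

section
/- If p/q is a rational number in lowest terms with |α − p/q| < 1/(2q²), then the points {⟨kα⟩ : k = 0, 1, …, q−1} are spaced so that any two consecutive points (in cyclic order on [0,1)) are within 3/(2q) of each other. In particular, each of the q disjoint intervals (i/q − 1/(2q), i/q + 1/(2q)) for i = 1,…,q−1 contains exactly one point of the set, namely ⟨ī α⟩ where ī p ≡ i (mod q) with 0 ≤ ī < q. -/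
/-!
Write `α = p/q + ε` with `|ε| < 1/(2q²)`. For `|n| < q` the number `nα` is within
`(q-1)|ε| < 1/(2q)` of `np/q`, so `⟨nα⟩` lies in the window of radius `1/(2q)` around `r/q`,
where `r ∈ {1, …, q-1}` is the residue of `np` mod `q` (when it is nonzero). These windows are
disjoint and `k ↦ kp` permutes the residues mod `q`, which gives part (b). For part (a), from
`⟨jα⟩` step to the `k < q` with `(k - j)p ≡ 1 (mod q)`: then `⟨kα - jα⟩` lies in the window
around `1/q`, i.e. in `(1/(2q), 3/(2q))`, so the cyclic successor of `⟨jα⟩` is closer than that.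
-/

open Set

theorem Int.fract_fract_sub_fract {R : Type*} [Ring R] [LinearOrder R] [IsOrderedRing R]
    [FloorRing R] (a b : R) :
    Int.fract (Int.fract a - Int.fract b) = Int.fract (a - b) :=
  Int.fract_eq_fract.2 ⟨⌊b⌋ - ⌊a⌋, by push_cast [Int.fract]; abel⟩

theorem eq_of_mem_Ioo_div_of_mem_Ioo_div {q : ℝ} (hq : 0 < q) {a b : ℤ} {y : ℝ}
    (ha : y ∈ Ioo ((a : ℝ) / q - 1 / (2 * q)) ((a : ℝ) / q + 1 / (2 * q)))
    (hb : y ∈ Ioo ((b : ℝ) / q - 1 / (2 * q)) ((b : ℝ) / q + 1 / (2 * q))) : a = b := by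
  have hab : (a : ℝ) < b + 1 := by
    rw [← div_lt_div_iff_of_pos_right hq, add_div]
    linarith [ha.1, hb.2, show (1 : ℝ) / q = 1 / (2 * q) + 1 / (2 * q) by field_simp; norm_num]
  have hba : (b : ℝ) < a + 1 := by
    rw [← div_lt_div_iff_of_pos_right hq, add_div]
    linarith [hb.1, ha.2, show (1 : ℝ) / q = 1 / (2 * q) + 1 / (2 * q) by field_simp; norm_num]
  have : a < b + 1 := by exact_mod_cast hab
  have : b < a + 1 := by exact_mod_cast hba
  omega

theorem Int.fract_mem_Ioo_of_abs_sub_lt {x : ℝ} {m : ℤ} {q : ℕ} (hq : 0 < q)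
    (hx : |x - m / q| < 1 / (2 * q)) (hm : m % q ≠ 0) :
    Int.fract x ∈
      Ioo (((m % q : ℤ) : ℝ) / q - 1 / (2 * q)) (((m % q : ℤ) : ℝ) / q + 1 / (2 * q)) := by
  set r := m % (q : ℤ)
  have hq' : (0 : ℝ) < q := by exact_mod_cast hq
  have hr_pos : (1 : ℝ) ≤ r := by
    have := Int.emod_nonneg m (by omega : (q : ℤ) ≠ 0)
    exact_mod_cast (by omega : 1 ≤ r)
  have hr_lt : (r : ℝ) + 1 ≤ q := by
    have := Int.emod_lt_of_pos m (by omega : (0 : ℤ) < q)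
    exact_mod_cast (by omega : r + 1 ≤ q)
  have hdecomp : (m : ℝ) / q = (m / q : ℤ) + r / q := by
    have h := congrArg (Int.cast (R := ℝ)) (Int.ediv_mul_add_emod m q)
    push_cast at h
    field_simp
    linarith
  have hgap : 1 / (2 * (q : ℝ)) ≤ r / q - 1 / (2 * q) ∧
      (r : ℝ) / q + 1 / (2 * q) ≤ 1 - 1 / (2 * q) := by
    constructor <;> field_simp <;> linarith
  obtain ⟨hlo, hhi⟩ := abs_lt.1 hx
  have hfract : Int.fract x = r / q + (x - m / q) :=
    Int.fract_eq_iff.2 ⟨by linarith, by linarith, m / q, by rw [hdecomp]; ring⟩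
  rw [hfract]
  constructor <;> linarith

section

variable {α : ℝ} {p : ℤ} {q : ℕ}

theorem exists_natCast_mul_emod_eq (hq : 0 < q) (hcop : Int.gcd p q = 1) (i : ℤ) :
    ∃ k : ℕ, k < q ∧ (k : ℤ) * p % q = i % q := by
  obtain ⟨a, b, hab⟩ := Int.isCoprime_iff_gcd_eq_one.2 hcop
  have hnonneg : 0 ≤ i * a % q := Int.emod_nonneg _ (by omega)
  have hlt : i * a % q < q := Int.emod_lt_of_pos _ (by omega)
  refine ⟨(i * a % q).toNat, by omega, ?_⟩
  rw [Int.toNat_of_nonneg hnonneg]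
  calc i * a % q * p % q = i * a * p % q := ((Int.mod_modEq _ _).mul_right p)
    _ = (i + q * (-(i * b))) % q := by congr 1; linear_combination i * hab
    _ = i % q := Int.modEq_add_fac_self

theorem eq_of_natCast_mul_emod_eq (hcop : Int.gcd p q = 1) {k k' : ℕ} (hk : k < q) (hk' : k' < q)
    (h : (k : ℤ) * p % q = (k' : ℤ) * p % q) : k = k' := by
  have hmod : (k : ℤ) ≡ k' [ZMOD q] := by
    simpa [Int.gcd_comm, hcop] using Int.ModEq.cancel_right_div_gcd (by omega) h
  exact (Int.natCast_modEq_iff.1 hmod).eq_of_lt_of_lt hk hk'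

theorem abs_intCast_mul_sub_lt (hq : 0 < q) (happ : |α - p / q| < 1 / (2 * (q : ℝ) ^ 2))
    {n : ℤ} (hn : n.natAbs < q) : |n * α - ((n * p : ℤ) : ℝ) / q| < 1 / (2 * q) := by
  have hq' : (1 : ℝ) ≤ q := by exact_mod_cast hq
  have hn' : |(n : ℝ)| ≤ q - 1 := by
    have h : (n.natAbs : ℝ) + 1 ≤ q := by exact_mod_cast (by omega : n.natAbs + 1 ≤ q)
    rw [Nat.cast_natAbs, Int.cast_abs] at h
    linarith
  calc |n * α - ((n * p : ℤ) : ℝ) / q| = |(n : ℝ)| * |α - p / q| := by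
        rw [← abs_mul, mul_sub, Int.cast_mul, mul_div_assoc]
    _ ≤ (q - 1) * (1 / (2 * (q : ℝ) ^ 2)) := by gcongr
    _ < 1 / (2 * q) := by
        rw [mul_one_div, div_lt_div_iff₀ (by positivity) (by positivity)]
        nlinarith

theorem fract_intCast_mul_mem_Ioo (hq : 0 < q) (happ : |α - p / q| < 1 / (2 * (q : ℝ) ^ 2))
    {n : ℤ} (hn : n.natAbs < q) (hr : n * p % q ≠ 0) :
    Int.fract (n * α) ∈
      Ioo (((n * p % q : ℤ) : ℝ) / q - 1 / (2 * q))
        (((n * p % q : ℤ) : ℝ) / q + 1 / (2 * q)) :=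
  Int.fract_mem_Ioo_of_abs_sub_lt hq (abs_intCast_mul_sub_lt hq happ hn) hr

theorem natCast_mul_emod_eq_of_fract_mem_Ioo (hq : 0 < q) (hcop : Int.gcd p q = 1)
    (happ : |α - p / q| < 1 / (2 * (q : ℝ) ^ 2)) {k i : ℕ} (hk : k < q) (hi : 1 ≤ i)
    (hmem : Int.fract (k * α) ∈
      Ioo ((i : ℝ) / q - 1 / (2 * q)) ((i : ℝ) / q + 1 / (2 * q))) :
    (k : ℤ) * p % q = i := by
  by_cases hr : (k : ℤ) * p % q = 0
  · have hqk : (q : ℤ) ∣ k :=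
      (Int.isCoprime_iff_gcd_eq_one.2 hcop).symm.dvd_of_dvd_mul_right (Int.dvd_of_emod_eq_zero hr)
    have hk0 : k = 0 := Nat.eq_zero_of_dvd_of_lt (Int.natCast_dvd_natCast.1 hqk) hk
    have hlo : 1 / (2 * (q : ℝ)) ≤ i / q - 1 / (2 * q) := by
      have : (1 : ℝ) ≤ i := by exact_mod_cast hi
      field_simp; linarith
    have := hmem.1
    simp only [hk0, CharP.cast_eq_zero, zero_mul, Int.fract_zero] at this
    linarith [show (0 : ℝ) < 1 / (2 * q) by positivity]
  · have hmem' := fract_intCast_mul_mem_Ioo hq happ (n := k) (by simpa using hk) hr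
    rw [Int.cast_natCast] at hmem'
    exact eq_of_mem_Ioo_div_of_mem_Ioo_div (by exact_mod_cast hq) hmem' (by simpa using hmem)

theorem exists_fract_sub_mem_Ioo (hq : 2 ≤ q) (hcop : Int.gcd p q = 1)
    (happ : |α - p / q| < 1 / (2 * (q : ℝ) ^ 2)) {j : ℕ} (hj : j < q) :
    ∃ k < q, Int.fract ((k : ℝ) * α - j * α) ∈ Ioo (1 / (2 * (q : ℝ))) (3 / (2 * q)) := by
  obtain ⟨k, hk, hkp⟩ := exists_natCast_mul_emod_eq (by omega) hcop (j * p + 1)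
  have hstep : ((k : ℤ) - j) * p % q = 1 := by
    have : (k : ℤ) * p ≡ j * p + 1 [ZMOD q] := hkp
    rw [sub_mul, this.sub_right (j * p), add_sub_cancel_left]
    exact Int.emod_eq_of_lt (by norm_num) (by omega)
  have hmem := fract_intCast_mul_mem_Ioo (by omega) happ (n := k - j) (by omega)
    (by rw [hstep]; norm_num)
  rw [hstep] at hmem
  have hlo : (1 : ℝ) / q - 1 / (2 * q) = 1 / (2 * q) := by field_simp; ring
  have hhi : (1 : ℝ) / q + 1 / (2 * q) = 3 / (2 * q) := by field_simp; ring
  refine ⟨k, hk, ?_⟩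
  push_cast at hmem
  rwa [hlo, hhi, sub_mul] at hmem

end

theorem stmt_13_general (α : ℝ) (p : ℤ) (q : ℕ) (hq : 0 < q)
    (hcop : Int.gcd p q = 1)
    (happ : |α - (p : ℝ) / q| < 1 / (2 * (q : ℝ) ^ 2))
    (S : Set ℝ) (hS : S = {y : ℝ | ∃ k : ℕ, k < q ∧ y = Int.fract (k * α)}) :
    (∀ x ∈ S, ∀ y ∈ S, x ≠ y →
      (∀ z ∈ S, z ≠ x → Int.fract (y - x) ≤ Int.fract (z - x)) →
      Int.fract (y - x) ≤ 3 / (2 * q)) ∧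
    (∀ i : ℕ, 1 ≤ i → i < q →
      (∃! k : ℕ, k < q ∧
        Int.fract (k * α) ∈ Set.Ioo ((i : ℝ) / q - 1 / (2 * q)) ((i : ℝ) / q + 1 / (2 * q))) ∧
      ∀ k : ℕ, k < q →
        Int.fract (k * α) ∈ Set.Ioo ((i : ℝ) / q - 1 / (2 * q)) ((i : ℝ) / q + 1 / (2 * q)) →
        ((k : ℤ) * p) % (q : ℤ) = (i : ℤ)) := by
  have residue := fun {k i : ℕ} (hk : k < q) (hi : 1 ≤ i) =>
    natCast_mul_emod_eq_of_fract_mem_Ioo (α := α) hq hcop happ hk hi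
  subst hS
  refine ⟨?_, fun i hi hiq => ⟨?_, fun k hk => residue hk hi⟩⟩
  · rintro _ ⟨j, hj, rfl⟩ _ ⟨k', hk', rfl⟩ hxy hmin
    obtain rfl | hq2 : q = 1 ∨ 2 ≤ q := by omega
    · obtain rfl : j = 0 := by omega
      obtain rfl : k' = 0 := by omega
      exact absurd rfl hxy
    obtain ⟨k, hk, hmem⟩ := exists_fract_sub_mem_Ioo hq2 hcop happ hj
    rw [← Int.fract_fract_sub_fract] at hmem
    have hne : Int.fract ((k : ℝ) * α) ≠ Int.fract (j * α) := fun h => by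
      rw [h, sub_self, Int.fract_zero] at hmem
      linarith [hmem.1, show (0 : ℝ) < 1 / (2 * q) by positivity]
    exact (hmin _ ⟨k, hk, rfl⟩ hne).trans hmem.2.le
  · obtain ⟨k, hk, hkp⟩ := exists_natCast_mul_emod_eq hq hcop i
    have hki : (k : ℤ) * p % q = i := by
      rw [hkp]; exact Int.emod_eq_of_lt (by positivity) (by omega)
    refine ⟨k, ⟨hk, ?_⟩, fun k' ⟨hk', hmem⟩ =>
      eq_of_natCast_mul_emod_eq hcop hk' hk ((residue hk' hi hmem).trans hki.symm)⟩
    have := fract_intCast_mul_mem_Ioo hq happ (n := k) (by simpa using hk) (by omega)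
    rwa [hki, Int.cast_natCast, Int.cast_natCast] at this

/-- Spacing of the points `{⟨kα⟩ : 0 ≤ k < q}` when `|α - p/q| < 1/(2q²)` with `p/q` in
lowest terms: (a) any point of the set and its cyclic successor are within `3/(2q)` of
each other (cyclic distance measured by `Int.fract (y - x)`), and (b) for each
`i = 1, …, q-1` the interval `(i/q - 1/(2q), i/q + 1/(2q))` contains exactly one point
of the set, namely `⟨ī α⟩` where `ī p ≡ i (mod q)`. -/
theorem stmt_13 (α : ℝ) (hirr : Irrational α) (p : ℤ) (q : ℕ) (hq : 0 < q)
    (hcop : Int.gcd p q = 1)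
    (happ : |α - (p : ℝ) / q| < 1 / (2 * (q : ℝ) ^ 2))
    (S : Set ℝ) (hS : S = {y : ℝ | ∃ k : ℕ, k < q ∧ y = Int.fract (k * α)}) :
    (∀ x ∈ S, ∀ y ∈ S, x ≠ y →
      (∀ z ∈ S, z ≠ x → Int.fract (y - x) ≤ Int.fract (z - x)) →
      Int.fract (y - x) ≤ 3 / (2 * q)) ∧
    (∀ i : ℕ, 1 ≤ i → i < q →
      (∃! k : ℕ, k < q ∧
        Int.fract (k * α) ∈ Set.Ioo ((i : ℝ) / q - 1 / (2 * q)) ((i : ℝ) / q + 1 / (2 * q))) ∧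
      ∀ k : ℕ, k < q →
        Int.fract (k * α) ∈ Set.Ioo ((i : ℝ) / q - 1 / (2 * q)) ((i : ℝ) / q + 1 / (2 * q)) →
        ((k : ℤ) * p) % (q : ℤ) = (i : ℤ)) :=
  stmt_13_general α p q hq hcop happ S hS
end

section
/- There exist an integer N₀ and a constant c₀ > 0 such that for all n > N₀, a simple symmetric random walk on ℤ of length n³ remains within distance n of its starting point with probability at most e^{−c₀ n}. -/
/-- The position after `k` steps of the walk with steps `±1` encoded by `σ`. -/
def walk {m : ℕ} (σ : Fin m → Bool) (k : ℕ) : ℤ :=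
  ∑ i : Fin m, if (i : ℕ) < k then (if σ i then 1 else -1) else 0

lemma walk_succ {m : ℕ} (σ : Fin m → Bool) (k : ℕ) (h : k < m) :
    walk σ (k + 1) = walk σ k + (if σ ⟨k, h⟩ then 1 else -1) := by
  unfold walk
  have h2 : (if σ ⟨k, h⟩ then (1 : ℤ) else -1)
      = ∑ i : Fin m, if i = ⟨k, h⟩ then (if σ i then (1 : ℤ) else -1) else 0 := by
    rw [Finset.sum_ite_eq']; simp
  rw [h2, ← Finset.sum_add_distrib]
  apply Finset.sum_congr rfl
  intro i _
  rcases lt_trichotomy (i : ℕ) k with hl | he | hg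
  · have : i ≠ ⟨k, h⟩ := by simp [Fin.ext_iff]; omega
    simp [hl, Nat.lt_succ_of_lt hl, this]
  · have : i = ⟨k, h⟩ := by simp [Fin.ext_iff, he]
    simp [this, he]
  · have h1 : ¬ ((i : ℕ) < k + 1) := by omega
    have h3 : ¬ ((i : ℕ) < k) := by omega
    have : i ≠ ⟨k, h⟩ := by simp [Fin.ext_iff]; omega
    simp [h1, h3, this]

def blockS {m : ℕ} (σ : Fin m → Bool) (a t : ℕ) : ℤ :=
  ∑ i ∈ Finset.range t, (if h : a + i < m then (if σ ⟨a + i, h⟩ then 1 else -1) else 0)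

lemma walk_add {m : ℕ} (σ : Fin m → Bool) (a : ℕ) :
    ∀ t, a + t ≤ m → walk σ (a + t) = walk σ a + blockS σ a t := by
  intro t
  induction t with
  | zero => simp [blockS]
  | succ t ih =>
    intro h
    have h1 : a + t < m := by omega
    have := walk_succ σ (a + t) h1
    rw [← Nat.add_assoc, this, ih (by omega)]
    rw [show blockS σ a (t+1) = blockS σ a t + (if σ ⟨a + t, h1⟩ then 1 else -1) by
      unfold blockS; rw [Finset.sum_range_succ, dif_pos h1]]
    ring

lemma block_bound {m : ℕ} (σ : Fin m → Bool) (N : ℤ) (hσ : ∀ k ≤ m, |walk σ k| ≤ N)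
    (a t : ℕ) (h : a + t ≤ m) (pf : ∀ i : Fin t, a + i.1 < m) :
    |∑ i : Fin t, (if σ ⟨a + i.1, pf i⟩ then (1:ℤ) else -1)| ≤ 2*N := by
  have hwa := walk_add σ a t h
  have hTS : (∑ i : Fin t, (if σ ⟨a + i.1, pf i⟩ then (1:ℤ) else -1)) = blockS σ a t := by
    rw [blockS, ← Fin.sum_univ_eq_sum_range]
    refine Finset.sum_congr rfl (fun i _ => ?_)
    rw [dif_pos (pf i)]
  rw [hTS]
  have h1 := hσ a (le_trans (Nat.le_add_right a t) h)
  have h2 := hσ (a+t) h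
  have heq : blockS σ a t = walk σ (a+t) - walk σ a := by rw [hwa]; ring
  rw [heq]
  calc |walk σ (a+t) - walk σ a| ≤ |walk σ (a+t)| + |walk σ a| := abs_sub _ _
    _ ≤ N + N := add_le_add h2 h1
    _ = 2*N := by ring

lemma T_eq (L : ℕ) (τ : Fin L → Bool) :
    (∑ i : Fin L, if τ i then (1:ℤ) else -1)
      = 2 * ((Finset.univ.filter fun i => τ i = true).card : ℤ) - L := by
  have h : ∀ i : Fin L, (if τ i then (1:ℤ) else -1)
      = 2 * (if τ i = true then (1:ℤ) else 0) - 1 := by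
    intro i; by_cases h : τ i <;> simp [h]
  rw [Finset.sum_congr rfl (fun i _ => h i), Finset.sum_sub_distrib, ← Finset.mul_sum,
    Finset.sum_boole, Finset.sum_const, Finset.card_univ, Fintype.card_fin]
  simp

lemma cb_sq_bound (m : ℕ) : (Nat.centralBinom m)^2 * (3*m+1) ≤ 16^m := by
  induction m with
  | zero => simp [Nat.centralBinom]
  | succ m ih =>
    have h := Nat.succ_mul_centralBinom_succ m
    have key : (2*m+1)^2*(3*m+4) ≤ 4*(m+1)^2*(3*m+1) := by nlinarith
    refine Nat.le_of_mul_le_mul_left ?_ (show 0 < (m+1)^2 by positivity)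
    calc (m+1)^2 * (Nat.centralBinom (m+1)^2 * (3*(m+1)+1))
        = ((m+1) * Nat.centralBinom (m+1))^2 * (3*m+4) := by ring
      _ = (2*(2*m+1)*Nat.centralBinom m)^2 * (3*m+4) := by rw [h]
      _ = (2*m+1)^2*(3*m+4) * (4 * Nat.centralBinom m ^2) := by ring
      _ ≤ 4*(m+1)^2*(3*m+1) * (4 * Nat.centralBinom m^2) :=
          Nat.mul_le_mul_right _ key
      _ = 16*(m+1)^2 * (Nat.centralBinom m^2 * (3*m+1)) := by ring
      _ ≤ 16*(m+1)^2 * 16^m := Nat.mul_le_mul_left _ ih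
      _ = (m+1)^2 * 16^(m+1) := by ring

lemma Abound (n : ℕ) (hn : 1 ≤ n) :
    4 * Nat.card {τ : Fin (16*n^2) → Bool //
        |∑ i, (if τ i then (1:ℤ) else -1)| ≤ 2*n} ≤ 3 * 2 ^ (16*n^2) := by
  have hn8 : n ≤ 8*n^2 := by nlinarith
  obtain ⟨A, hAdef⟩ : ∃ A, Nat.card {τ : Fin (16*n^2) → Bool //
        |∑ i, (if τ i then (1:ℤ) else -1)| ≤ 2*n} = A := ⟨_, rfl⟩
  rw [hAdef]
  have hA : A
      ≤ Nat.card {s : Finset (Fin (16*n^2)) // s.card ∈ Finset.Icc (8*n^2-n) (8*n^2+n)} := by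
    rw [← hAdef]
    apply Nat.card_le_card_of_injective
      (f := fun τ => ⟨Finset.univ.filter fun i => τ.1 i = true, by
        have h2 := τ.2
        rw [T_eq] at h2
        rw [abs_le] at h2
        simp only [Finset.mem_Icc]
        constructor
        · zify [hn8]; push_cast at h2 ⊢; linarith [h2.1]
        · have : ((Finset.univ.filter fun i => τ.1 i = true).card : ℤ) ≤ 8*n^2 + n := by
            push_cast at h2 ⊢; linarith [h2.2]
          exact_mod_cast this⟩)
    intro τ₁ τ₂ h
    rw [Subtype.mk.injEq] at h
    apply Subtype.ext; funext j
    have hj := Finset.ext_iff.mp h j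
    simp only [Finset.mem_filter, Finset.mem_univ, true_and] at hj
    cases h1 : τ₁.1 j <;> cases h2 : τ₂.1 j <;> simp_all
  have hB : Nat.card {s : Finset (Fin (16*n^2)) // s.card ∈ Finset.Icc (8*n^2-n) (8*n^2+n)}
      ≤ (2*n+1) * Nat.centralBinom (8*n^2) := by
    rw [Nat.card_eq_fintype_card, Fintype.card_subtype]
    have hsub : (Finset.univ.filter
          fun s : Finset (Fin (16*n^2)) => s.card ∈ Finset.Icc (8*n^2-n) (8*n^2+n))
        ⊆ (Finset.Icc (8*n^2-n) (8*n^2+n)).biUnion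
            (fun t => Finset.powersetCard t Finset.univ) := by
      intro s hs
      simp only [Finset.mem_filter, Finset.mem_univ, true_and] at hs
      exact Finset.mem_biUnion.mpr ⟨s.card, hs,
        Finset.mem_powersetCard.mpr ⟨Finset.subset_univ s, rfl⟩⟩
    calc (Finset.univ.filter
          fun s : Finset (Fin (16*n^2)) => s.card ∈ Finset.Icc (8*n^2-n) (8*n^2+n)).card
        ≤ ((Finset.Icc (8*n^2-n) (8*n^2+n)).biUnion
            (fun t => Finset.powersetCard t Finset.univ)).card :=
          Finset.card_le_card hsub
      _ ≤ ∑ t ∈ Finset.Icc (8*n^2-n) (8*n^2+n), (Finset.powersetCard t Finset.univ).card :=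
          Finset.card_biUnion_le
      _ ≤ (Finset.Icc (8*n^2-n) (8*n^2+n)).card * Nat.centralBinom (8*n^2) := by
          rw [← smul_eq_mul]
          apply Finset.sum_le_card_nsmul
          intro t _
          calc (Finset.powersetCard t (Finset.univ : Finset (Fin (16*n^2)))).card
              = (16*n^2).choose t := by
                rw [Finset.card_powersetCard, Finset.card_univ, Fintype.card_fin]
            _ = (2*(8*n^2)).choose t := by rw [show 16*n^2 = 2*(8*n^2) by ring]
            _ ≤ _ := Nat.choose_le_centralBinom t _
      _ = (2*n+1) * Nat.centralBinom (8*n^2) := by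
          rw [Nat.card_Icc]
          congr 1
          have h2 : 8*n^2 - n ≤ 8*n^2 + n + 1 :=
            le_trans (Nat.sub_le _ _) (by linarith)
          zify [hn8, h2]
          ring
  have hAB := le_trans hA hB
  have hsq : (4 * A)^2 ≤ (3 * 2 ^ (16*n^2))^2 := by
    have hcb := cb_sq_bound (8*n^2)
    have hpoly : 16*(2*n+1)^2 ≤ 9*(3*(8*n^2)+1) := by nlinarith
    have h16 : (16:ℕ)^(8*n^2) = (2^(16*n^2))^2 := by
      rw [show (16:ℕ) = 2^4 from rfl, ← pow_mul, ← pow_mul]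
      congr 1; ring
    calc (4 * A)^2
        ≤ (4 * ((2*n+1) * Nat.centralBinom (8*n^2)))^2 :=
          Nat.pow_le_pow_left (Nat.mul_le_mul_left 4 hAB) 2
      _ = 16*(2*n+1)^2 * Nat.centralBinom (8*n^2)^2 := by ring
      _ ≤ 9*(3*(8*n^2)+1) * Nat.centralBinom (8*n^2)^2 :=
          Nat.mul_le_mul_right _ hpoly
      _ = 9 * (Nat.centralBinom (8*n^2)^2 * (3*(8*n^2)+1)) := by ring
      _ ≤ 9 * 16^(8*n^2) := Nat.mul_le_mul_left _ hcb
      _ = (3 * 2^(16*n^2))^2 := by rw [h16]; ring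
  exact le_of_pow_le_pow_left₀ (by norm_num) (by positivity) hsq

/-- Lemma 8: there exist `N₀` and `c₀ > 0` such that for all `n > N₀`, a simple
symmetric random walk of length `n³` stays within `n` of its start with probability
at most `e^{-c₀ n}`. The probability is the proportion of the `2^{n³}` sign sequences. -/
theorem stmt_14 : ∃ (N₀ : ℕ) (c₀ : ℝ), 0 < c₀ ∧ ∀ n : ℕ, N₀ < n →
    (Nat.card {σ : Fin (n ^ 3) → Bool // ∀ k ≤ n ^ 3, |walk σ k| ≤ (n : ℤ)} : ℝ)
      / 2 ^ (n ^ 3) ≤ Real.exp (-(c₀ * n)) := by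
  refine ⟨32, 1/128, by norm_num, ?_⟩
  intro n hn
  have hn1 : 1 ≤ n := by omega
  have h32n : n ≤ 32*(n/16) := by omega
  have hLB : 16*n^2*(n/16) ≤ n^3 := by
    calc 16*n^2*(n/16) = n^2 * (n/16*16) := by ring
      _ ≤ n^2 * n := Nat.mul_le_mul_left _ (Nat.div_mul_le_self n 16)
      _ = n^3 := by ring
  have hL0 : 0 < 16*n^2 := by positivity
  have pfA : ∀ (j : Fin (n/16)) (i : Fin (16*n^2)), j.1*(16*n^2) + i.1 < n^3 := by
    intro j i
    calc j.1*(16*n^2) + i.1 < j.1*(16*n^2) + 16*n^2 := by omega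
      _ = (j.1+1)*(16*n^2) := by ring
      _ ≤ (n/16)*(16*n^2) := Nat.mul_le_mul_right _ j.2
      _ = 16*n^2*(n/16) := by ring
      _ ≤ n^3 := hLB
  have pfB : ∀ (r : Fin (n^3 - 16*n^2*(n/16))), 16*n^2*(n/16) + r.1 < n^3 := by
    intro r
    have := r.2
    omega
  -- the outer injection and cardinality bound
  have hcard : Nat.card {σ : Fin (n ^ 3) → Bool // ∀ k ≤ n ^ 3, |walk σ k| ≤ (n : ℤ)}
      ≤ (Nat.card {τ : Fin (16*n^2) → Bool //
          |∑ i, (if τ i then (1:ℤ) else -1)| ≤ 2*n}) ^ (n/16)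
        * 2 ^ (n^3 - 16*n^2*(n/16)) := by
    have hstep : Nat.card {σ : Fin (n ^ 3) → Bool // ∀ k ≤ n ^ 3, |walk σ k| ≤ (n : ℤ)}
        ≤ Nat.card ((Fin (n/16) → {τ : Fin (16*n^2) → Bool //
            |∑ i, (if τ i then (1:ℤ) else -1)| ≤ 2*n}) × (Fin (n^3 - 16*n^2*(n/16)) → Bool)) := by
      apply Nat.card_le_card_of_injective
        (f := fun σ =>
          (fun j => ⟨fun i => σ.1 ⟨j.1*(16*n^2) + i.1, pfA j i⟩,
            block_bound σ.1 n σ.2 (j.1*(16*n^2)) (16*n^2)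
              (by
                calc j.1*(16*n^2) + 16*n^2 = (j.1+1)*(16*n^2) := by ring
                  _ ≤ (n/16)*(16*n^2) := Nat.mul_le_mul_right _ j.2
                  _ = 16*n^2*(n/16) := by ring
                  _ ≤ n^3 := hLB)
              (fun i => pfA j i)⟩,
           fun r => σ.1 ⟨16*n^2*(n/16) + r.1, pfB r⟩))
      intro σ₁ σ₂ h
      have hfst := congrArg Prod.fst h
      have hsnd := congrArg Prod.snd h
      simp only at hfst hsnd
      apply Subtype.ext; funext k
      by_cases hk : k.1 < 16*n^2*(n/16)
      · have hj : k.1 / (16*n^2) < n/16 := by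
          rw [Nat.div_lt_iff_lt_mul hL0]
          calc k.1 < 16*n^2*(n/16) := hk
            _ = (n/16)*(16*n^2) := by ring
        have hi : k.1 % (16*n^2) < 16*n^2 := Nat.mod_lt _ hL0
        have h1 := congrFun hfst ⟨k.1/(16*n^2), hj⟩
        have h2 := congrArg Subtype.val h1
        have h3 := congrFun h2 ⟨k.1 % (16*n^2), hi⟩
        simp only at h3
        have hidx : (⟨k.1/(16*n^2)*(16*n^2) + k.1%(16*n^2),
            pfA ⟨k.1/(16*n^2), hj⟩ ⟨k.1 % (16*n^2), hi⟩⟩ : Fin (n^3)) = k := by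
          apply Fin.ext
          simp only
          rw [mul_comm]
          exact Nat.div_add_mod k.1 (16*n^2)
        rw [← hidx]
        exact h3
      · push_neg at hk
        have hr : k.1 - 16*n^2*(n/16) < n^3 - 16*n^2*(n/16) :=
          Nat.sub_lt_sub_right hk k.2
        have h1 := congrFun hsnd ⟨k.1 - 16*n^2*(n/16), hr⟩
        simp only at h1
        have hidx : (⟨16*n^2*(n/16) + (k.1 - 16*n^2*(n/16)),
            pfB ⟨k.1 - 16*n^2*(n/16), hr⟩⟩ : Fin (n^3)) = k := by
          apply Fin.ext
          simp only
          exact Nat.add_sub_cancel' hk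
        rw [← hidx]
        exact h1
    refine le_trans hstep (le_of_eq ?_)
    rw [Nat.card_prod, Nat.card_pi, Nat.card_pi]
    simp [Finset.prod_const]
  -- pass to the reals
  have hA4 := Abound n hn1
  have h2np : (0:ℝ) < 2 ^ (n^3) := by positivity
  have h2Lp : (0:ℝ) < 2 ^ (16*n^2) := by positivity
  have hsplit : ((2:ℝ))^(n^3) = 2^(16*n^2*(n/16)) * 2^(n^3 - 16*n^2*(n/16)) := by
    rw [← pow_add]
    congr 1
    exact (Nat.add_sub_cancel' hLB).symm
  obtain ⟨A, hAdef⟩ : ∃ A, Nat.card {τ : Fin (16*n^2) → Bool //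
      |∑ i, (if τ i then (1:ℤ) else -1)| ≤ 2*(n:ℤ)} = A := ⟨_, rfl⟩
  rw [hAdef] at hcard hA4
  have hratio : (Nat.card {σ : Fin (n ^ 3) → Bool // ∀ k ≤ n ^ 3, |walk σ k| ≤ (n : ℤ)} : ℝ)
      / 2 ^ (n ^ 3) ≤ ((A:ℝ)/2^(16*n^2))^(n/16) := by
    have heq : ((A:ℝ)^(n/16) * 2^(n^3 - 16*n^2*(n/16)))/((2:ℝ)^(n^3))
        = ((A:ℝ)/2^(16*n^2))^(n/16) := by
      rw [div_pow, ← pow_mul, hsplit]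
      rw [mul_div_mul_right _ _ (by positivity : ((2:ℝ)^(n^3 - 16*n^2*(n/16))) ≠ 0)]
    rw [← heq]
    gcongr
    exact_mod_cast hcard
  have hhalf : (A:ℝ)/2^(16*n^2) ≤ 3/4 := by
    rw [div_le_div_iff₀ h2Lp (by norm_num)]
    have : (4:ℝ) * A ≤ 3 * 2^(16*n^2) := by exact_mod_cast hA4
    linarith
  have hApos : (0:ℝ) ≤ (A:ℝ)/2^(16*n^2) := by positivity
  have hexp : (3/4:ℝ) ≤ Real.exp (-(1/4)) := by
    have := Real.add_one_le_exp (-(1/4):ℝ)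
    linarith
  have h32 : (n:ℝ) ≤ 32*(n/16 : ℕ) := by
    exact_mod_cast h32n
  calc (Nat.card {σ : Fin (n ^ 3) → Bool // ∀ k ≤ n ^ 3, |walk σ k| ≤ (n : ℤ)} : ℝ)
      / 2 ^ (n ^ 3)
      ≤ ((A:ℝ)/2^(16*n^2))^(n/16) := hratio
    _ ≤ (3/4:ℝ)^(n/16) := pow_le_pow_left₀ hApos hhalf _
    _ ≤ (Real.exp (-(1/4)))^(n/16) := pow_le_pow_left₀ (by norm_num) hexp _
    _ = Real.exp ((n/16 : ℕ) * (-(1/4))) := (Real.exp_nat_mul _ _).symm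
    _ ≤ Real.exp (-(1/128 * n)) := by
        apply Real.exp_le_exp.mpr
        linarith
end

section
/- Let 0 < α < 1 be irrational, let f_α(x) = |α − x| and f_1(x) = |1 − x|, and suppose θ is chosen uniformly from {α, 1}. Fix x₀ ∈ (0, α) with generic orbit, and let ρ be the signed graph-distance function on the orbit O_{x₀} (ρ(v₀) = 0 at x₀, positive on the right component of G − v₀, negative on the left). Then for any x ∈ O_{x₀}, ρ(f_θ(x)) = ρ(x) + 1 with probability 1/2 and ρ(f_θ(x)) = ρ(x) − 1 with probability 1/2. -/
/-!
Label the orbit point `⟨nα + εx₀⟩` by `(n, ε)` and give it the potential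
`ε (n + ⌊nα + εx₀⌋)`. With `z = nα + εx₀`, the map `f_1` sends the label `(n, ε)` to
`(-n, -ε)`, and `f_α` sends it to `(1 - n, -ε)` or to `(n - 1, ε)` according as `⟨z⟩ < α` or
`⟨z⟩ > α`; tracking the floor shows that `f_1` raises the potential by `ε` and `f_α` lowers it
by `ε`. So the potential vanishes only at `x₀`, changes by one along every edge, and every other
vertex has a neighbour of smaller absolute potential: its absolute value is the distance from
`v₀`. A walk avoiding `v₀` keeps the sign of the potential, so vertices of opposite potential
sign lie in different components of `G - v₀`, and the hypothesis on `ρ` forces the sign of `ρ`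
to be a function of the sign of the potential. Hence `ρ = ± potential`, and the two choices of
`θ` move `ρ` by `+1` and `-1` in some order.
-/

open MeasureTheory ENNReal

section FloorRing

variable {R : Type*} [Ring R] [LinearOrder R] [IsOrderedRing R] [FloorRing R]

lemma Int.floor_eq_and_fract_eq_of_eq_intCast_add {z t : R} {k : ℤ} (h : z = k + t)
    (ht₀ : 0 ≤ t) (ht₁ : t < 1) : ⌊z⌋ = k ∧ Int.fract z = t := by
  subst h
  rw [Int.floor_intCast_add, Int.floor_eq_zero_iff.mpr ⟨ht₀, ht₁⟩, Int.fract_intCast_add,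
    Int.fract_eq_self.mpr ⟨ht₀, ht₁⟩]
  exact ⟨add_zero k, rfl⟩

lemma strictMono_add_floor_mul_add {α : R} (hα : 0 ≤ α) (c : R) :
    StrictMono fun n : ℤ => n + ⌊n * α + c⌋ := by
  intro m n hmn
  have hcast : (m : R) ≤ n := by exact_mod_cast hmn.le
  have : ⌊m * α + c⌋ ≤ ⌊n * α + c⌋ := Int.floor_mono (by gcongr)
  change m + _ < n + _
  omega

end FloorRing

section PotentialGraph

variable {V : Type*} {G : SimpleGraph V} {v₀ : V} {τ : V → ℤ}

lemma SimpleGraph.Walk.natAbs_sub_le_length (hadj : ∀ u v, G.Adj u v → (τ u - τ v).natAbs ≤ 1)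
    {u v : V} (p : G.Walk u v) : (τ u - τ v).natAbs ≤ p.length := by
  induction p with
  | nil => simp
  | cons h _ ih =>
    have := hadj _ _ h
    rw [SimpleGraph.Walk.length_cons]
    omega

lemma SimpleGraph.exists_walk_length_le_natAbs (h₀ : ∀ v, τ v = 0 → v = v₀)
    (hdesc : ∀ v, τ v ≠ 0 → ∃ w, G.Adj v w ∧ (τ w).natAbs < (τ v).natAbs) (v : V) :
    ∃ p : G.Walk v v₀, p.length ≤ (τ v).natAbs := by
  induction h : (τ v).natAbs using Nat.strong_induction_on generalizing v with
  | _ n ih =>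
    by_cases hv : τ v = 0
    · obtain rfl := h₀ v hv
      exact ⟨.nil, Nat.zero_le _⟩
    · obtain ⟨w, hvw, hw⟩ := hdesc v hv
      obtain ⟨p, hp⟩ := ih _ (h ▸ hw) w rfl
      exact ⟨.cons hvw p, by rw [SimpleGraph.Walk.length_cons]; omega⟩

lemma SimpleGraph.dist_eq_natAbs_of_potential (h₀ : ∀ v, τ v = 0 ↔ v = v₀)
    (hadj : ∀ u v, G.Adj u v → (τ u - τ v).natAbs ≤ 1)
    (hdesc : ∀ v, τ v ≠ 0 → ∃ w, G.Adj v w ∧ (τ w).natAbs < (τ v).natAbs) (v : V) :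
    G.dist v₀ v = (τ v).natAbs := by
  obtain ⟨p, hp⟩ := exists_walk_length_le_natAbs (fun v => (h₀ v).1) hdesc v
  obtain ⟨q, hq⟩ := p.reverse.reachable.exists_walk_length_eq_dist
  have hlow := q.natAbs_sub_le_length hadj
  rw [(h₀ v₀).2 rfl, hq] at hlow
  have hup := SimpleGraph.dist_le p.reverse
  rw [SimpleGraph.Walk.length_reverse] at hup
  omega

lemma SimpleGraph.pos_iff_of_reachable_induce_ne (h₀ : ∀ v, τ v = 0 → v = v₀)
    (hadj : ∀ u v, G.Adj u v → (τ u - τ v).natAbs ≤ 1) {u v : {w | w ≠ v₀}}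
    (h : (G.induce {w | w ≠ v₀}).Reachable u v) : 0 < τ u ↔ 0 < τ v := by
  obtain ⟨p⟩ := h
  induction p with
  | nil => rfl
  | @cons a b _ hab _ ih =>
    have hstep := hadj _ _ (SimpleGraph.induce_adj.mp hab)
    have ha : τ a ≠ 0 := fun h => a.2 (h₀ _ h)
    have hb : τ b ≠ 0 := fun h => b.2 (h₀ _ h)
    rw [← ih]
    omega

lemma SimpleGraph.exists_eq_mul_of_reachable_induce_iff (h₀ : ∀ v, τ v = 0 ↔ v = v₀)
    (hadj : ∀ u v, G.Adj u v → (τ u - τ v).natAbs ≤ 1) {ρ : V → ℤ}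
    (habs : ∀ v, (ρ v).natAbs = (τ v).natAbs)
    (hρ : ∀ (u v : V) (hu : u ≠ v₀) (hv : v ≠ v₀),
      (G.induce {w | w ≠ v₀}).Reachable ⟨u, hu⟩ ⟨v, hv⟩ ↔ (0 < ρ u ↔ 0 < ρ v))
    {a b : V} (ha : 0 < τ a) (hb : τ b < 0) :
    ∃ c : ℤ, (c = 1 ∨ c = -1) ∧ ∀ v, ρ v = c * τ v := by
  have hne : ∀ v, τ v ≠ 0 → v ≠ v₀ := fun v hv e => hv ((h₀ v).2 e)
  have hopp : ∀ u v, 0 < τ u → τ v < 0 → ¬(0 < ρ u ↔ 0 < ρ v) := fun u v hu hv h => by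
    have := pos_iff_of_reachable_induce_ne (fun v => (h₀ v).1) hadj
      ((hρ u v (hne u hu.ne') (hne v hv.ne)).2 h)
    change 0 < τ u ↔ 0 < τ v at this
    omega
  have hsign : ∀ v, τ v ≠ 0 → (0 < ρ v ↔ (0 < τ v ↔ 0 < ρ a)) := fun v hv => by
    rcases hv.lt_or_gt with hneg | hpos
    · have := hopp a v ha hneg
      have : ¬0 < τ v := hneg.not_gt
      tauto
    · have := hopp v b hpos hb
      have := hopp a b ha hb
      tauto
  refine ⟨if 0 < ρ a then 1 else -1, by split_ifs <;> simp, fun v => ?_⟩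
  have hv := habs v
  by_cases hτ : τ v = 0
  · rw [hτ] at hv ⊢
    omega
  · have := hsign v hτ
    split_ifs <;> omega

end PotentialGraph

lemma MeasureTheory.Measure.inv_two_smul_dirac_add_dirac_apply {β : Type*} [MeasurableSpace β]
    [MeasurableSingletonClass β] {a b : β} {s : Set β} (h : a ∈ s ↔ b ∉ s) :
    ((2 : ℝ≥0∞)⁻¹ • (dirac a + dirac b)) s = 1 / 2 := by
  rw [Measure.smul_apply, Measure.add_apply, Measure.dirac_apply, Measure.dirac_apply]
  by_cases ha : a ∈ s
  · simp [ha, h.mp ha]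
  · simp [ha, not_not.mp (mt h.mpr ha)]

namespace RotationOrbit

def orbit (α x₀ : ℝ) : Set ℝ :=
  {y | ∃ n ε : ℤ, (ε = 1 ∨ ε = -1) ∧ y = Int.fract ((n : ℝ) * α + ε * x₀)}

def IsGeneric (α x₀ : ℝ) : Prop :=
  ∀ n n' ε ε' : ℤ, (ε = 1 ∨ ε = -1) → (ε' = 1 ∨ ε' = -1) →
    Int.fract ((n : ℝ) * α + ε * x₀) = Int.fract ((n' : ℝ) * α + ε' * x₀) → n = n' ∧ ε = ε'

def orbitGraph (α x₀ : ℝ) : SimpleGraph (orbit α x₀) :=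
  SimpleGraph.fromRel fun u v => |α - (u : ℝ)| = v ∨ |1 - (u : ℝ)| = v

noncomputable def labelPotential (α x₀ : ℝ) (n ε : ℤ) : ℤ :=
  ε * (n + ⌊(n : ℝ) * α + ε * x₀⌋)

-- On a generic orbit the label is unique, so this is well defined there; off the orbit it is `0`.
open Classical in
noncomputable def potential (α x₀ : ℝ) (x : ℝ) : ℤ :=
  if h : ∃ p : ℤ × ℤ, (p.2 = 1 ∨ p.2 = -1) ∧ x = Int.fract ((p.1 : ℝ) * α + p.2 * x₀) then
    labelPotential α x₀ h.choose.1 h.choose.2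
  else 0

variable {α x₀ : ℝ} {n ε : ℤ}

lemma abs_one_sub_fract_eq_and_labelPotential_neg_neg (hz : Int.fract ((n : ℝ) * α + ε * x₀) ≠ 0) :
    |1 - Int.fract ((n : ℝ) * α + ε * x₀)| = Int.fract (((-n : ℤ) : ℝ) * α + (-ε : ℤ) * x₀) ∧
      labelPotential α x₀ (-n) (-ε) = labelPotential α x₀ n ε + ε := by
  set z := (n : ℝ) * α + ε * x₀
  have hz' : ((-n : ℤ) : ℝ) * α + (-ε : ℤ) * x₀ = -z := by push_cast; ring
  obtain ⟨hfloor, hfract⟩ := Int.floor_eq_and_fract_eq_of_eq_intCast_add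
    (z := -z) (k := -⌊z⌋ - 1) (t := 1 - Int.fract z)
    (by push_cast; linarith [Int.floor_add_fract z])
    (by linarith [Int.fract_lt_one z]) (by linarith [(Int.fract_nonneg z).lt_of_ne' hz])
  refine ⟨by rw [hz', hfract, abs_of_nonneg (by linarith [Int.fract_lt_one z])], ?_⟩
  unfold labelPotential
  rw [hz', hfloor]
  ring

lemma exists_label_abs_sub_fract (h0 : 0 ≤ α) (h1 : α < 1) (hε : ε = 1 ∨ ε = -1)
    (hz : Int.fract ((n : ℝ) * α + ε * x₀) ≠ α) :
    ∃ n' ε' : ℤ, (ε' = 1 ∨ ε' = -1) ∧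
      |α - Int.fract ((n : ℝ) * α + ε * x₀)| = Int.fract ((n' : ℝ) * α + ε' * x₀) ∧
      labelPotential α x₀ n' ε' = labelPotential α x₀ n ε - ε := by
  set z := (n : ℝ) * α + ε * x₀
  have hdecomp := Int.floor_add_fract z
  have hfract₀ := Int.fract_nonneg z
  have hfract₁ := Int.fract_lt_one z
  rcases hz.lt_or_gt with hlt | hgt
  · have hz' : ((1 - n : ℤ) : ℝ) * α + (-ε : ℤ) * x₀ = α - z := by push_cast; ring
    obtain ⟨hfloor, hfract⟩ := Int.floor_eq_and_fract_eq_of_eq_intCast_add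
      (z := α - z) (k := -⌊z⌋) (t := α - Int.fract z) (by push_cast; linarith)
      (by linarith) (by linarith)
    refine ⟨1 - n, -ε, by omega, by rw [hz', hfract, abs_of_nonneg (by linarith)], ?_⟩
    unfold labelPotential
    rw [hz', hfloor]
    ring
  · have hz' : ((n - 1 : ℤ) : ℝ) * α + ε * x₀ = z - α := by push_cast; ring
    obtain ⟨hfloor, hfract⟩ := Int.floor_eq_and_fract_eq_of_eq_intCast_add
      (z := z - α) (k := ⌊z⌋) (t := Int.fract z - α) (by linarith)
      (by linarith) (by linarith)
    refine ⟨n - 1, ε, hε, by rw [hz', hfract, abs_of_neg (by linarith)]; ring, ?_⟩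
    unfold labelPotential
    rw [hz', hfloor]
    ring

lemma labelPotential_zero_neg_one (hx₀ : 0 < x₀) (hx₀1 : x₀ ≤ 1) :
    labelPotential α x₀ 0 (-1) = 1 := by
  have : ⌊-x₀⌋ = -1 := by rw [Int.floor_eq_iff]; push_cast; constructor <;> linarith
  simp [labelPotential, this]

lemma labelPotential_one_neg_one (hx₀α : x₀ < α) (hαx₀ : α < 1 + x₀) :
    labelPotential α x₀ 1 (-1) = -1 := by
  have : ⌊α - x₀⌋ = 0 := Int.floor_eq_zero_iff.mpr ⟨by linarith, by linarith⟩
  simp [labelPotential, ← sub_eq_add_neg, this]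

lemma labelPotential_eq_zero_iff (h0 : 0 ≤ α) (h1 : α < 1) (hx₀ : 0 < x₀) (hx₀α : x₀ < α)
    (hε : ε = 1 ∨ ε = -1) : labelPotential α x₀ n ε = 0 ↔ n = 0 ∧ ε = 1 := by
  have hmono := strictMono_add_floor_mul_add h0 (ε * x₀)
  rcases hε with rfl | rfl
  · have hat0 : (0 : ℤ) + ⌊((0 : ℤ) : ℝ) * α + (1 : ℤ) * x₀⌋ = 0 := by
      simpa using Int.floor_eq_zero_iff.mpr ⟨hx₀.le, by linarith⟩
    simp only [labelPotential, one_mul, and_true]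
    exact ⟨fun h => hmono.injective (h.trans hat0.symm), by rintro rfl; exact hat0⟩
  · have hat0 := labelPotential_zero_neg_one hx₀ (by linarith : x₀ ≤ 1) (α := α)
    have hat1 := labelPotential_one_neg_one hx₀α (by linarith : α < 1 + x₀)
    simp only [labelPotential] at hat0 hat1 ⊢
    have hfn : n + ⌊(n : ℝ) * α + (-1 : ℤ) * x₀⌋ ≠ 0 := by
      rcases le_or_gt n 0 with hn | hn
      · have := hmono.monotone hn
        omega
      · have := hmono.monotone (show 1 ≤ n by omega)
        omega
    omega

lemma orbitGraph_adj_of_eq {u v : orbit α x₀} (hne : (u : ℝ) ≠ v)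
    (h : |α - (u : ℝ)| = v ∨ |1 - (u : ℝ)| = v) : (orbitGraph α x₀).Adj u v :=
  (SimpleGraph.fromRel_adj _ _ _).mpr ⟨fun e => hne (congrArg Subtype.val e), Or.inl h⟩

namespace IsGeneric

variable (hgen : IsGeneric α x₀)
include hgen

lemma fract_ne_zero (hε : ε = 1 ∨ ε = -1) : Int.fract ((n : ℝ) * α + ε * x₀) ≠ 0 := by
  intro h
  have hneg : Int.fract (((-n : ℤ) : ℝ) * α + (-ε : ℤ) * x₀) =
      Int.fract ((n : ℝ) * α + ε * x₀) := by
    rw [show ((-n : ℤ) : ℝ) * α + (-ε : ℤ) * x₀ = -((n : ℝ) * α + ε * x₀) by push_cast; ring,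
      Int.fract_neg_eq_zero.mpr h, h]
  have := (hgen _ _ _ _ (by omega) hε hneg).2
  omega

lemma fract_ne_alpha (hε : ε = 1 ∨ ε = -1) : Int.fract ((n : ℝ) * α + ε * x₀) ≠ α := by
  intro h
  apply hgen.fract_ne_zero (n := n - 1) hε
  rw [show ((n - 1 : ℤ) : ℝ) * α + ε * x₀ =
      (n * α + ε * x₀) - Int.fract ((n : ℝ) * α + ε * x₀) by rw [h]; push_cast; ring,
    Int.self_sub_fract, Int.fract_intCast]

lemma potential_fract (hε : ε = 1 ∨ ε = -1) :
    potential α x₀ (Int.fract ((n : ℝ) * α + ε * x₀)) = labelPotential α x₀ n ε := by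
  have h : ∃ p : ℤ × ℤ, (p.2 = 1 ∨ p.2 = -1) ∧
      Int.fract ((n : ℝ) * α + ε * x₀) = Int.fract ((p.1 : ℝ) * α + p.2 * x₀) :=
    ⟨(n, ε), hε, rfl⟩
  obtain ⟨hn, hε'⟩ := hgen _ _ _ _ h.choose_spec.1 hε h.choose_spec.2.symm
  rw [potential, dif_pos h, hn, hε']

lemma exists_potential_step (h0 : 0 ≤ α) (h1 : α < 1) {x : ℝ} (hx : x ∈ orbit α x₀) :
    ∃ ε : ℤ, (ε = 1 ∨ ε = -1) ∧ |1 - x| ∈ orbit α x₀ ∧ |α - x| ∈ orbit α x₀ ∧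
      potential α x₀ |1 - x| = potential α x₀ x + ε ∧
      potential α x₀ |α - x| = potential α x₀ x - ε := by
  obtain ⟨n, ε, hε, rfl⟩ := hx
  have hε' : -ε = 1 ∨ -ε = -1 := by omega
  obtain ⟨h1v, h1p⟩ := abs_one_sub_fract_eq_and_labelPotential_neg_neg (hgen.fract_ne_zero hε)
  obtain ⟨n', ε', hε'', hαv, hαp⟩ := exists_label_abs_sub_fract h0 h1 hε (hgen.fract_ne_alpha hε)
  refine ⟨ε, hε, ⟨-n, -ε, hε', h1v⟩, ⟨n', ε', hε'', hαv⟩, ?_, ?_⟩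
  · rw [h1v, hgen.potential_fract hε', hgen.potential_fract hε, h1p]
  · rw [hαv, hgen.potential_fract hε'', hgen.potential_fract hε, hαp]

lemma potential_eq_zero_iff (h0 : 0 ≤ α) (h1 : α < 1) (hx₀ : 0 < x₀) (hx₀α : x₀ < α) {x : ℝ}
    (hx : x ∈ orbit α x₀) : potential α x₀ x = 0 ↔ x = x₀ := by
  obtain ⟨n, ε, hε, rfl⟩ := hx
  have hx₀' : Int.fract (((0 : ℤ) : ℝ) * α + (1 : ℤ) * x₀) = x₀ := by
    simpa using Int.fract_eq_self.mpr ⟨hx₀.le, by linarith⟩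
  rw [hgen.potential_fract hε, labelPotential_eq_zero_iff h0 h1 hx₀ hx₀α hε]
  constructor
  · rintro ⟨rfl, rfl⟩
    exact hx₀'
  · exact fun h => hgen _ _ _ _ hε (Or.inl rfl) (h.trans hx₀'.symm)

lemma exists_potential_pos_and_neg (h1 : α < 1) (hx₀ : 0 < x₀) (hx₀α : x₀ < α) :
    (∃ a : orbit α x₀, 0 < potential α x₀ a) ∧ ∃ b : orbit α x₀, potential α x₀ b < 0 := by
  have hε : (-1 : ℤ) = 1 ∨ (-1 : ℤ) = -1 := Or.inr rfl
  refine ⟨⟨⟨_, 0, -1, hε, rfl⟩, ?_⟩, ⟨⟨_, 1, -1, hε, rfl⟩, ?_⟩⟩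
  · rw [hgen.potential_fract hε, labelPotential_zero_neg_one hx₀ (by linarith)]
    exact one_pos
  · rw [hgen.potential_fract hε, labelPotential_one_neg_one hx₀α (by linarith)]
    exact neg_one_lt_zero

lemma natAbs_sub_potential_le_one (h0 : 0 ≤ α) (h1 : α < 1) {u v : orbit α x₀}
    (h : (orbitGraph α x₀).Adj u v) : (potential α x₀ u - potential α x₀ v).natAbs ≤ 1 := by
  obtain ⟨-, (h | h) | (h | h)⟩ := (SimpleGraph.fromRel_adj _ _ _).mp h
  · obtain ⟨ε, hε, -, -, -, hp⟩ := hgen.exists_potential_step h0 h1 u.2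
    rw [← h, hp]
    omega
  · obtain ⟨ε, hε, -, -, hp, -⟩ := hgen.exists_potential_step h0 h1 u.2
    rw [← h, hp]
    omega
  · obtain ⟨ε, hε, -, -, -, hp⟩ := hgen.exists_potential_step h0 h1 v.2
    rw [← h, hp]
    omega
  · obtain ⟨ε, hε, -, -, hp, -⟩ := hgen.exists_potential_step h0 h1 v.2
    rw [← h, hp]
    omega

lemma exists_adj_natAbs_potential_lt (h0 : 0 ≤ α) (h1 : α < 1) {v : orbit α x₀}
    (hv : potential α x₀ v ≠ 0) :
    ∃ w, (orbitGraph α x₀).Adj v w ∧ (potential α x₀ w).natAbs < (potential α x₀ v).natAbs := by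
  obtain ⟨ε, hε, h1m, hαm, h1p, hαp⟩ := hgen.exists_potential_step h0 h1 v.2
  have h1adj : (orbitGraph α x₀).Adj v ⟨_, h1m⟩ :=
    orbitGraph_adj_of_eq (fun e => by
      change (v : ℝ) = |1 - (v : ℝ)| at e
      rw [← e] at h1p
      omega) (Or.inr rfl)
  have hαadj : (orbitGraph α x₀).Adj v ⟨_, hαm⟩ :=
    orbitGraph_adj_of_eq (fun e => by
      change (v : ℝ) = |α - (v : ℝ)| at e
      rw [← e] at hαp
      omega) (Or.inl rfl)
  by_cases hdir : 0 < ε * potential α x₀ v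
  · refine ⟨_, hαadj, ?_⟩
    rw [hαp]
    rcases hε with rfl | rfl <;> omega
  · refine ⟨_, h1adj, ?_⟩
    rw [h1p]
    rcases hε with rfl | rfl <;> omega

lemma potential_eq_zero_iff_eq (h0 : 0 ≤ α) (h1 : α < 1) (hx₀ : 0 < x₀) (hx₀α : x₀ < α)
    {v₀ : orbit α x₀} (hv₀ : (v₀ : ℝ) = x₀) (v : orbit α x₀) :
    potential α x₀ v = 0 ↔ v = v₀ := by
  rw [hgen.potential_eq_zero_iff h0 h1 hx₀ hx₀α v.2, Subtype.ext_iff, hv₀]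

end IsGeneric

end RotationOrbit

theorem stmt_16_general (α : ℝ) (h0 : 0 < α) (h1 : α < 1)
    (x₀ : ℝ) (hx₀ : 0 < x₀) (hx₀α : x₀ < α)
    (O : Set ℝ)
    (hO : O = {y | ∃ n ε : ℤ, (ε = 1 ∨ ε = -1) ∧ y = Int.fract ((n : ℝ) * α + ε * x₀)})
    -- genericity: the labels `(n, ε)` of orbit points are distinct
    (hgen : ∀ n n' ε ε' : ℤ, (ε = 1 ∨ ε = -1) → (ε' = 1 ∨ ε' = -1) →
      Int.fract ((n : ℝ) * α + ε * x₀) = Int.fract ((n' : ℝ) * α + ε' * x₀) →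
      n = n' ∧ ε = ε')
    (G : SimpleGraph O)
    (hG : G = SimpleGraph.fromRel
      (fun u v : O => |α - (u : ℝ)| = (v : ℝ) ∨ |1 - (u : ℝ)| = (v : ℝ)))
    (v₀ : O) (hv₀ : (v₀ : ℝ) = x₀)
    (ρ : ℝ → ℤ)
    -- `|ρ(v)|` is the graph distance from `v₀` to `v`
    (hρd : ∀ v : O, (ρ (v : ℝ)).natAbs = G.dist v₀ v)
    -- the sign of `ρ` distinguishes the two components of `G - v₀`
    (hρs : ∀ (u v : O) (hu : u ≠ v₀) (hv : v ≠ v₀),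
      (SimpleGraph.induce {w : O | w ≠ v₀} G).Reachable ⟨u, hu⟩ ⟨v, hv⟩ ↔
        (0 < ρ (u : ℝ) ↔ 0 < ρ (v : ℝ)))
    (μ : Measure ℝ) (hμ : μ = (2 : ℝ≥0∞)⁻¹ • (Measure.dirac α + Measure.dirac 1)) :
    ∀ x ∈ O, μ {θ : ℝ | ρ |θ - x| = ρ x + 1} = 1 / 2 ∧
      μ {θ : ℝ | ρ |θ - x| = ρ x - 1} = 1 / 2 := by
  subst hO hG hμ
  have hgen : RotationOrbit.IsGeneric α x₀ := hgen
  have h₀ := hgen.potential_eq_zero_iff_eq h0.le h1 hx₀ hx₀α hv₀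
  have hadj := fun u v => hgen.natAbs_sub_potential_le_one h0.le h1 (u := u) (v := v)
  have hdist := SimpleGraph.dist_eq_natAbs_of_potential h₀ hadj
    (fun v => hgen.exists_adj_natAbs_potential_lt h0.le h1 (v := v))
  obtain ⟨⟨a, ha⟩, ⟨b, hb⟩⟩ := hgen.exists_potential_pos_and_neg h1 hx₀ hx₀α
  obtain ⟨c, hc, hρc⟩ := SimpleGraph.exists_eq_mul_of_reachable_induce_iff h₀ hadj
    (ρ := fun v => ρ v) (fun v => (hρd v).trans (hdist v)) hρs ha hb
  intro x hx
  obtain ⟨ε, hε, h1m, hαm, h1p, hαp⟩ := hgen.exists_potential_step h0.le h1 hx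
  have hρx := hρc ⟨x, hx⟩
  have hρ1 := hρc ⟨_, h1m⟩
  have hρα := hρc ⟨_, hαm⟩
  simp only [h1p, hαp] at hρx hρ1 hρα
  constructor <;> apply Measure.inv_two_smul_dirac_add_dirac_apply <;>
    simp only [Set.mem_ofPred_eq] <;> rcases hc with rfl | rfl <;> rcases hε with rfl | rfl <;>
    omega

/-- Observation of Section 5.2: let `0 < α < 1` be irrational, `x₀ ∈ (0, α)` with
generic orbit `O = {⟨nα + εx₀⟩}`, let `G` be the orbit graph (edges given by
applications of `f_α(u) = |α - u|` and `f_1(u) = |1 - u|`), and let `ρ` be the signed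
graph distance from the cut-vertex `v₀ = x₀` (positive on one component of `G - v₀`,
negative on the other).  Then for `θ` uniform on `{α, 1}` and any `x` in the orbit,
`ρ(f_θ(x)) = ρ(x) + 1` with probability `1/2` and `ρ(f_θ(x)) = ρ(x) - 1` with
probability `1/2`. -/
theorem stmt_16 (α : ℝ) (h0 : 0 < α) (h1 : α < 1) (hirr : Irrational α)
    (x₀ : ℝ) (hx₀ : 0 < x₀) (hx₀α : x₀ < α)
    (O : Set ℝ)
    (hO : O = {y | ∃ n ε : ℤ, (ε = 1 ∨ ε = -1) ∧ y = Int.fract ((n : ℝ) * α + ε * x₀)})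
    -- genericity: the labels `(n, ε)` of orbit points are distinct
    (hgen : ∀ n n' ε ε' : ℤ, (ε = 1 ∨ ε = -1) → (ε' = 1 ∨ ε' = -1) →
      Int.fract ((n : ℝ) * α + ε * x₀) = Int.fract ((n' : ℝ) * α + ε' * x₀) →
      n = n' ∧ ε = ε')
    (G : SimpleGraph O)
    (hG : G = SimpleGraph.fromRel
      (fun u v : O => |α - (u : ℝ)| = (v : ℝ) ∨ |1 - (u : ℝ)| = (v : ℝ)))
    (v₀ : O) (hv₀ : (v₀ : ℝ) = x₀)
    (ρ : ℝ → ℤ) (hρ₀ : ρ x₀ = 0)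
    -- `|ρ(v)|` is the graph distance from `v₀` to `v`
    (hρd : ∀ v : O, (ρ (v : ℝ)).natAbs = G.dist v₀ v)
    -- the sign of `ρ` distinguishes the two components of `G - v₀`
    (hρs : ∀ (u v : O) (hu : u ≠ v₀) (hv : v ≠ v₀),
      (SimpleGraph.induce {w : O | w ≠ v₀} G).Reachable ⟨u, hu⟩ ⟨v, hv⟩ ↔
        (0 < ρ (u : ℝ) ↔ 0 < ρ (v : ℝ)))
    (μ : Measure ℝ) (hμ : μ = (2 : ℝ≥0∞)⁻¹ • (Measure.dirac α + Measure.dirac 1)) :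
    ∀ x ∈ O, μ {θ : ℝ | ρ |θ - x| = ρ x + 1} = 1 / 2 ∧
      μ {θ : ℝ | ρ |θ - x| = ρ x - 1} = 1 / 2 :=
  stmt_16_general α h0 h1 x₀ hx₀ hx₀α O hO hgen G hG v₀ hv₀ ρ hρd hρs μ hμ
end
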